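/- arXiv:2204.13328 — 5 statements merged into one kernel-verified Lean document; each statement's English description precedes it below -/
import Mathlib

section
/- For any measurable function u : ℝ^N → ℝ, any Young function Φ (continuous, convex, Φ(0)=0), and any t > 0, the set E_t = {(x,y) ∈ ℝ^{2N} : x ≠ y, Φ(|u(x)-u(y)|) ≥ Φ(t)·|x-y|^N} satisfies Φ(t)·|E_t|_{2N} ≤ 2·ω_N·∫_{ℝ^N} Φ(2|u(x)|) dx, where ω_N is the volume of the unit ball in ℝ^N and |·|_{2N} denotes Lebesgue measure on ℝ^{2N}. -/
/-!
Since Φ is nondecreasing on `[0, ∞)` and `|u x - u y| ≤ 2 max (|u x|, |u y|)`, the pair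
`(x, y)` lies in `E_t` only if `Φ t |x - y|^N ≤ g x` or `Φ t |x - y|^N ≤ g y`, where
`g = Φ (2 |u|)`. For fixed `x`, the first condition cuts out a closed ball of volume
`ω_N g x / Φ t`, so by Tonelli each of the two sets has measure `ω_N ∫ g / Φ t`.
-/

open MeasureTheory Metric Set Module

theorem ConvexOn.monotoneOn_of_isMinOn {𝕜 β : Type*} [Field 𝕜] [LinearOrder 𝕜]
    [IsStrictOrderedRing 𝕜] [AddCommMonoid β] [LinearOrder β] [IsOrderedCancelAddMonoid β]
    [Module 𝕜 β] [PosSMulStrictMono 𝕜 β] {s : Set 𝕜} {f : 𝕜 → β} {a : 𝕜}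
    (hf : ConvexOn 𝕜 s f) (ha : a ∈ s) (hmin : IsMinOn f s a) :
    MonotoneOn f (s ∩ Ici a) := by
  rintro y ⟨hy, hay⟩ z ⟨hz, -⟩ hyz
  rcases hay.eq_or_lt with rfl | hay
  · exact hmin hz
  · exact hf.le_right_of_left_le'' ha hz hay hyz (hmin hy)

theorem MonotoneOn.measurable_comp_of_nonneg {α : Type*} [MeasurableSpace α] {f : ℝ → ℝ}
    (hf : MonotoneOn f (Ici 0)) {g : α → ℝ} (hg : Measurable g) (hg0 : ∀ x, 0 ≤ g x) :
    Measurable (f ∘ g) := by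
  have hmono : Monotone fun s => f (max s 0) := fun s s' hss' =>
    hf (le_max_right s 0) (le_max_right s' 0) (max_le_max_right 0 hss')
  convert hmono.measurable.comp hg using 1
  ext x
  simp [max_eq_left (hg0 x)]

theorem MonotoneOn.apply_abs_sub_le_max {f : ℝ → ℝ} (hf : MonotoneOn f (Ici 0)) (a b : ℝ) :
    f |a - b| ≤ max (f (2 * |a|)) (f (2 * |b|)) := by
  have hab := abs_sub a b
  rcases le_total |a| |b| with h | h
  · exact le_max_of_le_right <|
      hf (abs_nonneg (a - b)) (by positivity : (0 : ℝ) ≤ 2 * |b|) (by linarith)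
  · exact le_max_of_le_left <|
      hf (abs_nonneg (a - b)) (by positivity : (0 : ℝ) ≤ 2 * |a|) (by linarith)

section AddHaar

variable {E : Type*} [NormedAddCommGroup E] [NormedSpace ℝ E] [MeasurableSpace E] [BorelSpace E]
  [FiniteDimensional ℝ E] (μ : Measure E) [μ.IsAddHaarMeasure]

theorem addHaar_setOf_mul_dist_pow_le (hE : finrank ℝ E ≠ 0) (x : E) {c a : ℝ} (hc : 0 < c)
    (ha : 0 ≤ a) :
    μ {y | c * dist x y ^ finrank ℝ E ≤ a} = ENNReal.ofReal (a / c) * μ (ball 0 1) := by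
  set r := (a / c) ^ ((finrank ℝ E : ℝ)⁻¹)
  have hac : 0 ≤ a / c := div_nonneg ha hc.le
  have hr : r ^ finrank ℝ E = a / c := Real.rpow_inv_natCast_pow hac hE
  have hset : {y | c * dist x y ^ finrank ℝ E ≤ a} = closedBall x r := by
    ext y
    rw [mem_ofPred_eq, mem_closedBall, dist_comm, ← le_div_iff₀' hc, ← hr,
      pow_le_pow_iff_left₀ dist_nonneg (Real.rpow_nonneg hac _) hE]
  rw [hset, Measure.addHaar_closedBall μ x (Real.rpow_nonneg hac _), hr]

theorem prod_setOf_mul_dist_pow_le_fst (hE : finrank ℝ E ≠ 0) {f : E → ℝ}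
    (hf : Measurable f) (hf0 : ∀ x, 0 ≤ f x) {c : ℝ} (hc : 0 < c) :
    ENNReal.ofReal c * (μ.prod μ) {p | c * dist p.1 p.2 ^ finrank ℝ E ≤ f p.1} =
      μ (ball 0 1) * ∫⁻ x, ENNReal.ofReal (f x) ∂μ := by
  have hmeas : MeasurableSet {p : E × E | c * dist p.1 p.2 ^ finrank ℝ E ≤ f p.1} :=
    measurableSet_le (by fun_prop) (hf.comp measurable_fst)
  have hc' : ENNReal.ofReal c ≠ 0 := by simpa using hc
  rw [Measure.prod_apply hmeas]
  simp only [preimage_ofPred_eq, addHaar_setOf_mul_dist_pow_le μ hE _ hc (hf0 _)]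
  simp_rw [ENNReal.ofReal_div_of_pos hc, ENNReal.div_eq_inv_mul]
  rw [lintegral_mul_const _ (by fun_prop), lintegral_const_mul _ (by fun_prop), ← mul_assoc,
    ← mul_assoc, ENNReal.mul_inv_cancel hc' ENNReal.ofReal_ne_top, one_mul, mul_comm]

theorem prod_setOf_mul_dist_pow_le_snd (hE : finrank ℝ E ≠ 0) {f : E → ℝ}
    (hf : Measurable f) (hf0 : ∀ x, 0 ≤ f x) {c : ℝ} (hc : 0 < c) :
    ENNReal.ofReal c * (μ.prod μ) {p | c * dist p.1 p.2 ^ finrank ℝ E ≤ f p.2} =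
      μ (ball 0 1) * ∫⁻ x, ENNReal.ofReal (f x) ∂μ := by
  have hmeas : MeasurableSet {p : E × E | c * dist p.1 p.2 ^ finrank ℝ E ≤ f p.1} :=
    measurableSet_le (by fun_prop) (hf.comp measurable_fst)
  have hswap : {p : E × E | c * dist p.1 p.2 ^ finrank ℝ E ≤ f p.2} =
      Prod.swap ⁻¹' {p | c * dist p.1 p.2 ^ finrank ℝ E ≤ f p.1} := by
    ext p
    simp [dist_comm]
  rw [hswap, (Measure.measurePreserving_swap (μ := μ) (ν := μ)).measure_preimage
    hmeas.nullMeasurableSet, prod_setOf_mul_dist_pow_le_fst μ hE hf hf0 hc]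

end AddHaar

theorem stmt0_general (N : ℕ) (hN : 0 < N) (Φ : ℝ → ℝ)
    (hΦconv : ConvexOn ℝ (Ici 0) Φ)
    (hΦ0 : Φ 0 = 0) (hΦnn : ∀ s, 0 ≤ s → 0 ≤ Φ s)
    (u : EuclideanSpace ℝ (Fin N) → ℝ) (hu : Measurable u)
    (t : ℝ) :
    ENNReal.ofReal (Φ t) *
      volume {p : EuclideanSpace ℝ (Fin N) × EuclideanSpace ℝ (Fin N) |
        p.1 ≠ p.2 ∧ Φ t * dist p.1 p.2 ^ N ≤ Φ (|u p.1 - u p.2|)} ≤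
    2 * volume (ball (0 : EuclideanSpace ℝ (Fin N)) 1) *
      ∫⁻ x, ENNReal.ofReal (Φ (2 * |u x|)) := by
  rcases le_or_gt (Φ t) 0 with hΦt | hΦt
  · simp [ENNReal.ofReal_eq_zero.2 hΦt]
  have hmono : MonotoneOn Φ (Ici 0) := by
    have hmin : IsMinOn Φ (Ici 0) 0 := fun s hs => by simpa [hΦ0] using hΦnn s hs
    simpa using hΦconv.monotoneOn_of_isMinOn self_mem_Ici hmin
  set g := fun x => Φ (2 * |u x|)
  have hg : Measurable g := hmono.measurable_comp_of_nonneg (by fun_prop) fun x => by positivity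
  have hg0 : ∀ x, 0 ≤ g x := fun x => hΦnn _ (by positivity)
  set d := finrank ℝ (EuclideanSpace ℝ (Fin N))
  have hd : d = N := finrank_euclideanSpace_fin
  have hd0 : d ≠ 0 := hd ▸ hN.ne'
  rw [Measure.volume_eq_prod]
  calc _ ≤ ENNReal.ofReal (Φ t) *
        ((volume.prod volume) {p | Φ t * dist p.1 p.2 ^ d ≤ g p.1} +
          (volume.prod volume) {p | Φ t * dist p.1 p.2 ^ d ≤ g p.2}) := by
        gcongr
        refine (measure_mono ?_).trans (measure_union_le _ _)
        rintro p ⟨-, hp⟩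
        rw [hd]
        exact le_max_iff.1 (hp.trans (hmono.apply_abs_sub_le_max _ _))
    _ = _ := by
        rw [mul_add, prod_setOf_mul_dist_pow_le_fst _ hd0 hg hg0 hΦt,
          prod_setOf_mul_dist_pow_le_snd _ hd0 hg hg0 hΦt]
        ring

theorem stmt0 (N : ℕ) (hN : 0 < N) (Φ : ℝ → ℝ)
    (hΦc : ContinuousOn Φ (Ici 0)) (hΦconv : ConvexOn ℝ (Ici 0) Φ)
    (hΦ0 : Φ 0 = 0) (hΦnn : ∀ s, 0 ≤ s → 0 ≤ Φ s)
    (u : EuclideanSpace ℝ (Fin N) → ℝ) (hu : Measurable u)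
    (t : ℝ) (ht : 0 < t) :
    ENNReal.ofReal (Φ t) *
      volume {p : EuclideanSpace ℝ (Fin N) × EuclideanSpace ℝ (Fin N) |
        p.1 ≠ p.2 ∧ Φ t * dist p.1 p.2 ^ N ≤ Φ (|u p.1 - u p.2|)} ≤
    2 * volume (ball (0 : EuclideanSpace ℝ (Fin N)) 1) *
      ∫⁻ x, ENNReal.ofReal (Φ (2 * |u x|)) :=
  stmt0_general N hN Φ hΦconv hΦ0 hΦnn u hu t
end

section
/- Let Φ be a Young function satisfying the global Δ₂ condition (there exists k > 0 with Φ(2t) ≤ kΦ(t) for all t > 0), and let u : ℝ^N → ℝ satisfy ∫ Φ(|u|) < ∞. For t > 0 set E_t = {(x,y) ∈ ℝ^{2N} : x ≠ y, Φ(|u(x)-u(y)|) ≥ Φ(t)·|x-y|^N}. Then lim_{t→0⁺} Φ(t)·|E_t|_{2N} = 2·ω_N·∫_{ℝ^N} Φ(|u(x)|) dx. -/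
/-!
Substituting `ν = Φ t`, it suffices to show that `ν |{x ≠ y, ν |x - y|^N ≤ Φ |u x - u y|}|` tends
to `2 ω_N ∫ Φ |u|` as `ν → 0⁺`. When the bound is a function `G x` of `x` alone, integrating ball
volumes in `y` gives exactly `ω_N ∫ G / ν`; pairs bounded from both sides, `ν |x - y|^N ≤ F₁ x`
and `≤ F₂ y`, have measure `o(1 / ν)` by dominated convergence. Unless `|u x|` and `|u y|` are
comparable, which is such a two-sided bound, `|u x - u y|` is within a factor `1 ± ε` of the
larger of them; the Δ₂ condition and continuity of `Φ` then squeeze the limit between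
`2 ω_N ∫ Φ ((1 ± ε) |u|)`.
-/

open MeasureTheory Metric Set Filter Topology Module
open scoped ENNReal

def dominatedPairs {X : Type*} [Dist X] (n : ℕ) (ν : ℝ) (f : X × X → ℝ) : Set (X × X) :=
  {p | p.1 ≠ p.2 ∧ ν * dist p.1 p.2 ^ n ≤ f p}

section Doubling

variable {φ : ℝ → ℝ}

theorem ConvexOn.monotoneOn_Ici_of_isMinOn (hconv : ConvexOn ℝ (Ici 0) φ)
    (hmin : IsMinOn φ (Ici 0) 0) : MonotoneOn φ (Ici 0) := by
  intro a ha b hb hab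
  rcases (mem_Ici.mp ha).eq_or_lt with rfl | ha0
  · exact hmin hb
  · exact hconv.le_right_of_left_le'' self_mem_Ici hb ha0 hab (hmin ha)

variable {k : ℝ}

theorem le_max_pow_mul_of_doubling (hnn : ∀ s, 0 ≤ s → 0 ≤ φ s)
    (hk : ∀ s > 0, φ (2 * s) ≤ k * φ s) (m : ℕ) {s : ℝ} (hs : 0 ≤ s) :
    φ (2 ^ m * s) ≤ max k 1 ^ m * φ s := by
  induction m with
  | zero => simp
  | succ m ih =>
    have hdouble : φ (2 * (2 ^ m * s)) ≤ max k 1 * φ (2 ^ m * s) := by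
      rcases hs.eq_or_lt with rfl | hs
      · simpa using le_mul_of_one_le_left (hnn 0 le_rfl) (le_max_right k 1)
      · exact (hk _ (by positivity)).trans
          (mul_le_mul_of_nonneg_right (le_max_left k 1) (hnn _ (by positivity)))
    calc φ (2 ^ (m + 1) * s) = φ (2 * (2 ^ m * s)) := by ring_nf
      _ ≤ max k 1 * (max k 1 ^ m * φ s) :=
        hdouble.trans (mul_le_mul_of_nonneg_left ih (by positivity))
      _ = max k 1 ^ (m + 1) * φ s := by ring

theorem exists_le_mul_of_doubling (hm : MonotoneOn φ (Ici 0)) (hnn : ∀ s, 0 ≤ s → 0 ≤ φ s)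
    (hk : ∀ s > 0, φ (2 * s) ≤ k * φ s) {c : ℝ} (hc : 0 ≤ c) :
    ∃ κ, 0 ≤ κ ∧ ∀ s, 0 ≤ s → φ (c * s) ≤ κ * φ s := by
  obtain ⟨m, hm'⟩ := pow_unbounded_of_one_lt c one_lt_two
  refine ⟨max k 1 ^ m, by positivity, fun s hs => ?_⟩
  exact (hm (mul_nonneg hc hs) (mem_Ici.mpr (by positivity))
    (mul_le_mul_of_nonneg_right hm'.le hs)).trans (le_max_pow_mul_of_doubling hnn hk m hs)

theorem eq_zero_of_doubling (hm : MonotoneOn φ (Ici 0)) (hnn : ∀ s, 0 ≤ s → 0 ≤ φ s)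
    (hk : ∀ s > 0, φ (2 * s) ≤ k * φ s) {t₀ : ℝ} (ht₀ : 0 < t₀) (h : φ t₀ = 0) {s : ℝ}
    (hs : 0 ≤ s) : φ s = 0 := by
  obtain ⟨κ, -, hκ⟩ := exists_le_mul_of_doubling hm hnn hk (div_nonneg hs ht₀.le)
  have := hκ t₀ ht₀.le
  rw [div_mul_cancel₀ _ ht₀.ne', h, mul_zero] at this
  exact le_antisymm this (hnn s hs)

end Doubling

section Lebesgue

variable {α : Type*} [MeasurableSpace α] {μ : Measure α}

theorem lintegral_ofReal_le_mul_of_le {f g : α → ℝ} {κ : ℝ} (hκ : 0 ≤ κ)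
    (hfg : ∀ x, f x ≤ κ * g x) :
    ∫⁻ x, ENNReal.ofReal (f x) ∂μ ≤ ENNReal.ofReal κ * ∫⁻ x, ENNReal.ofReal (g x) ∂μ := by
  rw [← lintegral_const_mul' _ _ ENNReal.ofReal_ne_top]
  exact lintegral_mono fun x => (ENNReal.ofReal_le_ofReal (hfg x)).trans_eq (ENNReal.ofReal_mul hκ)

theorem lintegral_ofReal_ne_top_of_le_mul {f g : α → ℝ} {κ : ℝ} (hκ : 0 ≤ κ)
    (hfg : ∀ x, f x ≤ κ * g x) (hfin : ∫⁻ x, ENNReal.ofReal (g x) ∂μ ≠ ∞) :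
    ∫⁻ x, ENNReal.ofReal (f x) ∂μ ≠ ∞ :=
  ne_top_of_le_ne_top (ENNReal.mul_ne_top ENNReal.ofReal_ne_top hfin)
    (lintegral_ofReal_le_mul_of_le hκ hfg)

theorem tendsto_lintegral_ofReal_comp_mul {ψ : ℝ → ℝ} (hψc : Continuous ψ) (hψm : Monotone ψ)
    {κ : ℝ} (hκ : 0 ≤ κ) (hdouble : ∀ s, 0 ≤ s → ψ (2 * s) ≤ κ * ψ s) {g : α → ℝ}
    (hg : Measurable g) (hg0 : ∀ x, 0 ≤ g x) (hfin : ∫⁻ x, ENNReal.ofReal (ψ (g x)) ∂μ ≠ ∞) :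
    Tendsto (fun c => ∫⁻ x, ENNReal.ofReal (ψ (c * g x)) ∂μ) (𝓝 1)
      (𝓝 (∫⁻ x, ENNReal.ofReal (ψ (g x)) ∂μ)) := by
  have hbound : ∫⁻ x, ENNReal.ofReal (κ * ψ (g x)) ∂μ ≠ ∞ :=
    lintegral_ofReal_ne_top_of_le_mul hκ (fun _ => le_rfl) hfin
  refine tendsto_lintegral_filter_of_dominated_convergence _
    (Eventually.of_forall fun c => (hψc.measurable.comp (hg.const_mul c)).ennreal_ofReal) ?_ hbound
    (ae_of_all _ fun x => ?_)
  · filter_upwards [Iio_mem_nhds one_lt_two] with c hc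
    refine ae_of_all _ fun x => ENNReal.ofReal_le_ofReal ?_
    exact (hψm (mul_le_mul_of_nonneg_right hc.le (hg0 x))).trans (hdouble _ (hg0 x))
  · have := (ENNReal.continuous_ofReal.comp (hψc.comp (continuous_mul_const (g x)))).tendsto 1
    simpa [Function.comp_def] using this

end Lebesgue

section Metric

variable {X : Type*} [PseudoMetricSpace X] [ProperSpace X] [MeasurableSpace X]
  [OpensMeasurableSpace X] (μ : Measure X) [IsFiniteMeasureOnCompacts μ]

theorem tendsto_ofReal_mul_measure_setOf_mul_dist_pow_le (x : X) (n : ℕ) {F : X → ℝ}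
    (hF : Measurable F) (hfin : ∫⁻ y, ENNReal.ofReal (F y) ∂μ ≠ ∞) :
    Tendsto (fun ν => ENNReal.ofReal ν * μ {y | ν * dist x y ^ n ≤ F y}) (𝓝[>] 0) (𝓝 0) := by
  have hS : ∀ ν : ℝ, MeasurableSet {y | ν * dist x y ^ n ≤ F y} := fun ν =>
    measurableSet_le (by fun_prop) hF
  have hofReal : Tendsto ENNReal.ofReal (𝓝[>] 0) (𝓝 0) := by
    simpa using (ENNReal.continuous_ofReal.tendsto 0).mono_left nhdsWithin_le_nhds
  simp_rw [← lintegral_indicator_const (hS _)]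
  rw [← lintegral_zero]
  -- `ν 𝟙_{ν d(x,y)^n ≤ F y} ≤ 1` near `x`, and `≤ F y` once `d(x,y) ≥ 1`
  refine tendsto_lintegral_filter_of_dominated_convergence
    (fun y => (closedBall x 1).indicator 1 y + ENNReal.ofReal (F y))
    (Eventually.of_forall fun ν => measurable_const.indicator (hS ν)) ?_ ?_
    (ae_of_all _ fun y => ?_)
  · filter_upwards [Ioc_mem_nhdsGT one_pos] with ν ⟨hν0, hν1⟩
    refine ae_of_all _ fun y => ?_
    by_cases hy : y ∈ {y | ν * dist x y ^ n ≤ F y}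
    · rw [indicator_of_mem hy]
      by_cases hxy : dist y x ≤ 1
      · rw [indicator_of_mem (mem_closedBall.mpr hxy)]
        exact le_add_right (ENNReal.ofReal_le_one.mpr hν1)
      · refine le_add_left (ENNReal.ofReal_le_ofReal (le_trans ?_ hy))
        rw [dist_comm] at hxy
        exact le_mul_of_one_le_right hν0.le (one_le_pow₀ (not_le.mp hxy).le)
    · simp [indicator_of_notMem hy]
  · rw [lintegral_add_right _ hF.ennreal_ofReal, lintegral_indicator_one measurableSet_closedBall]
    exact ENNReal.add_ne_top.mpr ⟨measure_closedBall_lt_top.ne, hfin⟩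
  · exact tendsto_of_tendsto_of_tendsto_of_le_of_le tendsto_const_nhds hofReal
      (fun _ => zero_le) (fun ν => indicator_le (fun _ _ => le_rfl) y)

end Metric

section Pairs

theorem preimage_swap_dominatedPairs {X : Type*} [PseudoMetricSpace X] (n : ℕ) (ν : ℝ)
    (f : X × X → ℝ) :
    Prod.swap ⁻¹' dominatedPairs n ν f = dominatedPairs n ν (f ∘ Prod.swap) := by
  ext p
  simp [dominatedPairs, ne_comm, dist_comm]

theorem two_mul_measure_le_of_disjoint_swap {X : Type*} [MeasurableSpace X] (μ : Measure X)
    [SFinite μ] {L S : Set (X × X)} (hL : MeasurableSet L) (hdisj : Disjoint L (Prod.swap ⁻¹' L))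
    (hLS : L ∪ Prod.swap ⁻¹' L ⊆ S) : 2 * μ.prod μ L ≤ μ.prod μ S := by
  have hswap : μ.prod μ (Prod.swap ⁻¹' L) = μ.prod μ L :=
    Measure.measurePreserving_swap.measure_preimage hL.nullMeasurableSet
  calc 2 * μ.prod μ L = μ.prod μ (L ∪ Prod.swap ⁻¹' L) := by
        rw [measure_union hdisj (hL.preimage measurable_swap), hswap, two_mul]
    _ ≤ μ.prod μ S := measure_mono hLS

variable {E : Type*} [NormedAddCommGroup E] [NormedSpace ℝ E] [MeasurableSpace E] [BorelSpace E]
  [FiniteDimensional ℝ E] (μ : Measure E)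

theorem measurableSet_dominatedPairs (n : ℕ) (ν : ℝ) {f : E × E → ℝ} (hf : Measurable f) :
    MeasurableSet (dominatedPairs n ν f) :=
  (measurableSet_eq_fun measurable_fst measurable_snd).compl.inter
    (measurableSet_le (by fun_prop) hf)

theorem measure_dominatedPairs_comp_swap [SFinite μ] (n : ℕ) (ν : ℝ) {f : E × E → ℝ}
    (hf : Measurable f) :
    μ.prod μ (dominatedPairs n ν (f ∘ Prod.swap)) = μ.prod μ (dominatedPairs n ν f) := by
  rw [← preimage_swap_dominatedPairs]
  exact Measure.measurePreserving_swap.measure_preimage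
    (measurableSet_dominatedPairs n ν hf).nullMeasurableSet

variable [Nontrivial E] [μ.IsAddHaarMeasure]

theorem ofReal_mul_measure_setOf_mul_dist_pow_le (x : E) {ν A : ℝ} (hν : 0 < ν) (hA : 0 ≤ A) :
    ENNReal.ofReal ν * μ {y | x ≠ y ∧ ν * dist x y ^ finrank ℝ E ≤ A}
      = μ (ball 0 1) * ENNReal.ofReal A := by
  set d := finrank ℝ E
  have hd : d ≠ 0 := finrank_pos.ne'
  set r := (A / ν) ^ (d : ℝ)⁻¹
  have hr : 0 ≤ r := by positivity
  have hrd : r ^ d = A / ν := Real.rpow_inv_natCast_pow (by positivity) hd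
  have hset : {y | x ≠ y ∧ ν * dist x y ^ d ≤ A} = closedBall x r \ {x} := by
    ext y
    rw [mem_ofPred_eq, Set.mem_sdiff, mem_closedBall, dist_comm, mem_singleton_iff, ne_comm,
      ← pow_le_pow_iff_left₀ dist_nonneg hr hd, hrd, le_div_iff₀' hν, and_comm]
  rw [hset, measure_sdiff_null (measure_singleton x), Measure.addHaar_closedBall μ x hr, hrd,
    ← mul_assoc, ← ENNReal.ofReal_mul hν.le, mul_div_cancel₀ _ hν.ne', mul_comm]

theorem ofReal_mul_measure_dominatedPairs_fst {ν : ℝ} (hν : 0 < ν) {G : E → ℝ}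
    (hG : Measurable G) (hG0 : ∀ x, 0 ≤ G x) :
    ENNReal.ofReal ν * μ.prod μ (dominatedPairs (finrank ℝ E) ν fun p => G p.1)
      = μ (ball 0 1) * ∫⁻ x, ENNReal.ofReal (G x) ∂μ := by
  have hmeas : MeasurableSet (dominatedPairs (finrank ℝ E) ν fun p : E × E => G p.1) :=
    measurableSet_dominatedPairs _ _ (hG.comp measurable_fst)
  rw [Measure.prod_apply hmeas, ← lintegral_const_mul _ (measurable_measure_prodMk_left hmeas),
    ← lintegral_const_mul _ hG.ennreal_ofReal]
  exact lintegral_congr fun x => ofReal_mul_measure_setOf_mul_dist_pow_le μ x hν (hG0 x)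

theorem ofReal_mul_measure_dominatedPairs_snd {ν : ℝ} (hν : 0 < ν) {G : E → ℝ}
    (hG : Measurable G) (hG0 : ∀ x, 0 ≤ G x) :
    ENNReal.ofReal ν * μ.prod μ (dominatedPairs (finrank ℝ E) ν fun p => G p.2)
      = μ (ball 0 1) * ∫⁻ x, ENNReal.ofReal (G x) ∂μ := by
  rw [← ofReal_mul_measure_dominatedPairs_fst μ hν hG hG0]
  exact congrArg (ENNReal.ofReal ν * ·)
    (measure_dominatedPairs_comp_swap μ _ _ (hG.comp measurable_fst))

theorem tendsto_ofReal_mul_measure_dominatedPairs_inter {F₁ F₂ : E → ℝ} (hF₁ : Measurable F₁)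
    (hF₂ : Measurable F₂) (hF₁0 : ∀ x, 0 ≤ F₁ x) (hfin₁ : ∫⁻ x, ENNReal.ofReal (F₁ x) ∂μ ≠ ∞)
    (hfin₂ : ∫⁻ x, ENNReal.ofReal (F₂ x) ∂μ ≠ ∞) :
    Tendsto (fun ν => ENNReal.ofReal ν * μ.prod μ
        (dominatedPairs (finrank ℝ E) ν (fun p => F₁ p.1) ∩
          dominatedPairs (finrank ℝ E) ν (fun p => F₂ p.2))) (𝓝[>] 0) (𝓝 0) := by
  set d := finrank ℝ E
  have hmeas : ∀ ν, MeasurableSet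
      (dominatedPairs d ν (fun p => F₁ p.1) ∩ dominatedPairs d ν (fun p => F₂ p.2)) := fun ν =>
    (measurableSet_dominatedPairs d ν (hF₁.comp measurable_fst)).inter
      (measurableSet_dominatedPairs d ν (hF₂.comp measurable_snd))
  simp_rw [Measure.prod_apply (hmeas _),
    ← lintegral_const_mul _ (measurable_measure_prodMk_left (hmeas _))]
  rw [← lintegral_zero]
  refine tendsto_lintegral_filter_of_dominated_convergence
    (fun x => μ (ball 0 1) * ENNReal.ofReal (F₁ x))
    (Eventually.of_forall fun ν => (measurable_measure_prodMk_left (hmeas ν)).const_mul _) ?_ ?_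
    (ae_of_all _ fun x => ?_)
  · filter_upwards [self_mem_nhdsWithin] with ν hν
    refine ae_of_all _ fun x => ?_
    rw [← ofReal_mul_measure_setOf_mul_dist_pow_le μ x hν (hF₁0 x)]
    gcongr
    exact fun y hy => ⟨hy.1.1, hy.1.2⟩
  · rw [lintegral_const_mul _ hF₁.ennreal_ofReal]
    exact ENNReal.mul_ne_top measure_ball_lt_top.ne hfin₁
  · exact tendsto_of_tendsto_of_tendsto_of_le_of_le tendsto_const_nhds
      (tendsto_ofReal_mul_measure_setOf_mul_dist_pow_le μ x d hF₂ hfin₂) (fun _ => zero_le)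
      (fun ν => mul_le_mul_right (measure_mono fun y hy => hy.2.2) _)

end Pairs

theorem tendsto_of_approx_bounds {α β : Type*} {l : Filter α} {L : Filter β} [L.NeBot]
    {H : α → ℝ≥0∞} {up lo : β → ℝ≥0∞} {A : ℝ≥0∞} (hup : Tendsto up L (𝓝 A))
    (hlo : Tendsto lo L (𝓝 A))
    (hH_le : ∀ᶠ b in L, ∃ e : α → ℝ≥0∞, Tendsto e l (𝓝 0) ∧ ∀ᶠ a in l, H a ≤ up b + e a)
    (hH_ge : ∀ᶠ b in L, ∃ e : α → ℝ≥0∞, Tendsto e l (𝓝 0) ∧ ∀ᶠ a in l, lo b ≤ H a + e a) :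
    Tendsto H l (𝓝 A) := by
  refine tendsto_order.2 ⟨fun c hc => ?_, fun c hc => ?_⟩
  · obtain ⟨b, hb, e, he, hle⟩ := ((hlo.eventually (lt_mem_nhds hc)).and hH_ge).exists
    have hce : ∀ᶠ a in l, c + e a < lo b :=
      (tendsto_const_nhds.add he).eventually (gt_mem_nhds (by rwa [add_zero]))
    filter_upwards [hce, hle] with a h₁ h₂
    exact lt_of_add_lt_add_right (h₁.trans_le h₂)
  · obtain ⟨b, hb, e, he, hle⟩ := ((hup.eventually (gt_mem_nhds hc)).and hH_le).exists
    have hce : ∀ᶠ a in l, up b + e a < c :=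
      (tendsto_const_nhds.add he).eventually (gt_mem_nhds (by rwa [add_zero]))
    filter_upwards [hce, hle] with a h₁ h₂
    exact h₂.trans_lt h₁

theorem abs_sub_le_cases (a b : ℝ) {ε : ℝ} (hε : 0 < ε) :
    |a - b| ≤ (1 + ε) * |a| ∨ |a - b| ≤ (1 + ε) * |b| ∨
      (|a - b| ≤ (1 + ε⁻¹) * |a| ∧ |a - b| ≤ (1 + ε⁻¹) * |b|) := by
  have htri := abs_sub a b
  rcases le_or_gt |b| (ε * |a|) with hb | hb
  · left; linarith
  rcases le_or_gt |a| (ε * |b|) with ha | ha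
  · right; left; linarith
  have hba : |b| ≤ ε⁻¹ * |a| := by rw [inv_mul_eq_div, le_div_iff₀ hε]; linarith
  have hab : |a| ≤ ε⁻¹ * |b| := by rw [inv_mul_eq_div, le_div_iff₀ hε]; linarith
  right; right; constructor <;> linarith

theorem dominatedPairs_abs_sub_subset {X : Type*} [Dist X] {ψ : ℝ → ℝ} (hψ : Monotone ψ)
    (u : X → ℝ) {ε : ℝ} (hε : 0 < ε) (n : ℕ) (ν : ℝ) :
    dominatedPairs n ν (fun p => ψ |u p.1 - u p.2|) ⊆
      dominatedPairs n ν (fun p => ψ ((1 + ε) * |u p.1|)) ∪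
        dominatedPairs n ν (fun p => ψ ((1 + ε) * |u p.2|)) ∪
        (dominatedPairs n ν (fun p => ψ ((1 + ε⁻¹) * |u p.1|)) ∩
          dominatedPairs n ν (fun p => ψ ((1 + ε⁻¹) * |u p.2|))) := by
  rintro p ⟨hne, hle⟩
  rcases abs_sub_le_cases (u p.1) (u p.2) hε with h | h | ⟨h₁, h₂⟩
  · exact Or.inl (Or.inl ⟨hne, hle.trans (hψ h)⟩)
  · exact Or.inl (Or.inr ⟨hne, hle.trans (hψ h)⟩)
  · exact Or.inr ⟨⟨hne, hle.trans (hψ h₁)⟩, ⟨hne, hle.trans (hψ h₂)⟩⟩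

section Bounds

variable {E : Type*} [NormedAddCommGroup E] [NormedSpace ℝ E] [MeasurableSpace E] [BorelSpace E]
  [FiniteDimensional ℝ E] [Nontrivial E] (μ : Measure E) [μ.IsAddHaarMeasure]
  {ψ : ℝ → ℝ} {u : E → ℝ} {ν : ℝ}

theorem ofReal_mul_measure_dominatedPairs_le (hψm : Monotone ψ) (hψ0 : ∀ s, 0 ≤ ψ s)
    (hu : Measurable u) {ε : ℝ} (hε : 0 < ε) (hν : 0 < ν) :
    ENNReal.ofReal ν * μ.prod μ (dominatedPairs (finrank ℝ E) ν fun p => ψ |u p.1 - u p.2|) ≤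
      2 * μ (ball 0 1) * ∫⁻ x, ENNReal.ofReal (ψ ((1 + ε) * |u x|)) ∂μ +
        ENNReal.ofReal ν * μ.prod μ
          (dominatedPairs (finrank ℝ E) ν (fun p => ψ ((1 + ε⁻¹) * |u p.1|)) ∩
            dominatedPairs (finrank ℝ E) ν (fun p => ψ ((1 + ε⁻¹) * |u p.2|))) := by
  have hG : Measurable fun x => ψ ((1 + ε) * |u x|) := hψm.measurable.comp (hu.abs.const_mul _)
  calc _ ≤ ENNReal.ofReal ν * (μ.prod μ (dominatedPairs (finrank ℝ E) ν
          fun p => ψ ((1 + ε) * |u p.1|)) + μ.prod μ (dominatedPairs (finrank ℝ E) ν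
          fun p => ψ ((1 + ε) * |u p.2|)) + μ.prod μ
          (dominatedPairs (finrank ℝ E) ν (fun p => ψ ((1 + ε⁻¹) * |u p.1|)) ∩
            dominatedPairs (finrank ℝ E) ν (fun p => ψ ((1 + ε⁻¹) * |u p.2|)))) := by
        gcongr
        refine (measure_mono (dominatedPairs_abs_sub_subset hψm u hε _ ν)).trans ?_
        exact (measure_union_le _ _).trans (add_le_add_left (measure_union_le _ _) _)
    _ = _ := by
        rw [mul_add, mul_add, ofReal_mul_measure_dominatedPairs_fst μ hν hG fun _ => hψ0 _,
          ofReal_mul_measure_dominatedPairs_snd μ hν hG fun _ => hψ0 _]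
        ring

theorem two_mul_le_ofReal_mul_measure_dominatedPairs (hψm : Monotone ψ) (hψ0 : ∀ s, 0 ≤ ψ s)
    (hu : Measurable u) {ε κ : ℝ} (hε : ε ≤ 1) (hκ0 : 0 ≤ κ)
    (hκ : ∀ s, 0 ≤ s → ψ ((1 - ε) * s) ≤ κ * ψ (ε * s)) (hν : 0 < ν) :
    2 * μ (ball 0 1) * ∫⁻ x, ENNReal.ofReal (ψ ((1 - ε) * |u x|)) ∂μ ≤
      ENNReal.ofReal ν * μ.prod μ (dominatedPairs (finrank ℝ E) ν fun p => ψ |u p.1 - u p.2|) +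
        2 * (ENNReal.ofReal ν * μ.prod μ
          (dominatedPairs (finrank ℝ E) ν (fun p => ψ ((1 - ε) * |u p.1|)) ∩
            dominatedPairs (finrank ℝ E) ν (fun p => κ * ψ |u p.2|))) := by
  set d := finrank ℝ E
  have hG : Measurable fun x => ψ ((1 - ε) * |u x|) := hψm.measurable.comp (hu.abs.const_mul _)
  set L := dominatedPairs d ν (fun p => ψ ((1 - ε) * |u p.1|)) ∩ {p | |u p.2| < ε * |u p.1|}
  have hL : MeasurableSet L :=
    (measurableSet_dominatedPairs d ν (hG.comp measurable_fst)).inter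
      (measurableSet_lt (hu.abs.comp measurable_snd) ((hu.abs.comp measurable_fst).const_mul ε))
  have hLS : L ∪ Prod.swap ⁻¹' L ⊆ dominatedPairs d ν fun p => ψ |u p.1 - u p.2| := by
    rintro ⟨x, y⟩ (⟨⟨hne, hle⟩, hlt⟩ | ⟨⟨hne, hle⟩, hlt⟩)
    · refine ⟨hne, hle.trans (hψm ?_)⟩
      have := abs_sub_abs_le_abs_sub (u x) (u y)
      simp only [mem_ofPred_eq] at hlt
      linarith
    · simp only [mem_ofPred_eq, Prod.fst_swap, Prod.snd_swap] at hne hle hlt ⊢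
      refine ⟨hne.symm, ?_⟩
      rw [dist_comm] at hle
      refine hle.trans (hψm ?_)
      have := abs_sub_abs_le_abs_sub (u y) (u x)
      rw [abs_sub_comm]
      linarith
  have hdisj : Disjoint L (Prod.swap ⁻¹' L) := by
    refine Set.disjoint_left.2 fun ⟨x, y⟩ ⟨_, hxy⟩ ⟨_, hyx⟩ => ?_
    simp only [mem_ofPred_eq, Prod.fst_swap, Prod.snd_swap] at hxy hyx
    nlinarith [abs_nonneg (u x), abs_nonneg (u y)]
  have hcover : dominatedPairs d ν (fun p => ψ ((1 - ε) * |u p.1|)) ⊆ L ∪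
      (dominatedPairs d ν (fun p => ψ ((1 - ε) * |u p.1|)) ∩
        dominatedPairs d ν (fun p => κ * ψ |u p.2|)) := by
    rintro ⟨x, y⟩ hxy
    by_cases hlt : |u y| < ε * |u x|
    · exact Or.inl ⟨hxy, hlt⟩
    · refine Or.inr ⟨hxy, hxy.1, hxy.2.trans ((hκ _ (abs_nonneg _)).trans ?_)⟩
      exact mul_le_mul_of_nonneg_left (hψm (not_lt.mp hlt)) hκ0
  calc _ = 2 * (ENNReal.ofReal ν *
        μ.prod μ (dominatedPairs d ν fun p => ψ ((1 - ε) * |u p.1|))) := by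
        rw [ofReal_mul_measure_dominatedPairs_fst μ hν hG fun _ => hψ0 _, mul_assoc]
    _ ≤ 2 * (ENNReal.ofReal ν * (μ.prod μ L + μ.prod μ
          (dominatedPairs d ν (fun p => ψ ((1 - ε) * |u p.1|)) ∩
            dominatedPairs d ν (fun p => κ * ψ |u p.2|)))) := by
        gcongr
        exact (measure_mono hcover).trans (measure_union_le _ _)
    _ = ENNReal.ofReal ν * (2 * μ.prod μ L) + 2 * (ENNReal.ofReal ν * μ.prod μ
          (dominatedPairs d ν (fun p => ψ ((1 - ε) * |u p.1|)) ∩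
            dominatedPairs d ν (fun p => κ * ψ |u p.2|))) := by ring
    _ ≤ _ := by
        gcongr
        exact two_mul_measure_le_of_disjoint_swap μ hL hdisj hLS

end Bounds

theorem tendsto_ofReal_mul_measure_dominatedPairs {E : Type*} [NormedAddCommGroup E]
    [NormedSpace ℝ E] [MeasurableSpace E] [BorelSpace E] [FiniteDimensional ℝ E] [Nontrivial E]
    (μ : Measure E) [μ.IsAddHaarMeasure] {ψ : ℝ → ℝ} (hψc : Continuous ψ) (hψm : Monotone ψ)
    (hψ0 : ∀ s, 0 ≤ ψ s) {k : ℝ} (hk : ∀ s > 0, ψ (2 * s) ≤ k * ψ s) {u : E → ℝ}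
    (hu : Measurable u) (hfin : ∫⁻ x, ENNReal.ofReal (ψ |u x|) ∂μ ≠ ∞) :
    Tendsto (fun ν => ENNReal.ofReal ν *
        μ.prod μ (dominatedPairs (finrank ℝ E) ν fun p => ψ |u p.1 - u p.2|))
      (𝓝[>] 0) (𝓝 (2 * μ (ball 0 1) * ∫⁻ x, ENNReal.ofReal (ψ |u x|) ∂μ)) := by
  have hscale : ∀ c, 0 ≤ c → ∃ κ, 0 ≤ κ ∧ ∀ s, 0 ≤ s → ψ (c * s) ≤ κ * ψ s := fun _ =>
    exists_le_mul_of_doubling (hψm.monotoneOn _) (fun s _ => hψ0 s) hk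
  have hmeas_comp : ∀ c, Measurable fun x => ψ (c * |u x|) := fun c =>
    hψm.measurable.comp (hu.abs.const_mul c)
  have hfin_comp : ∀ c, 0 ≤ c → ∫⁻ x, ENNReal.ofReal (ψ (c * |u x|)) ∂μ ≠ ∞ := fun c hc => by
    obtain ⟨κ, hκ0, hκ⟩ := hscale _ hc
    exact lintegral_ofReal_ne_top_of_le_mul hκ0 (fun x => hκ _ (abs_nonneg _)) hfin
  have hlim : ∀ g : ℝ → ℝ, Continuous g → g 0 = 1 →
      Tendsto (fun ε => 2 * μ (ball 0 1) * ∫⁻ x, ENNReal.ofReal (ψ (g ε * |u x|)) ∂μ)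
        (𝓝[>] 0) (𝓝 (2 * μ (ball 0 1) * ∫⁻ x, ENNReal.ofReal (ψ |u x|) ∂μ)) := by
    intro g hg hg0
    obtain ⟨κ, hκ0, hκ⟩ := hscale 2 zero_le_two
    refine ENNReal.Tendsto.const_mul ((tendsto_lintegral_ofReal_comp_mul hψc hψm hκ0 hκ hu.abs
      (fun _ => abs_nonneg _) hfin).comp ?_) (Or.inr (by finiteness))
    exact hg0 ▸ (hg.tendsto 0).mono_left nhdsWithin_le_nhds
  refine tendsto_of_approx_bounds (hlim (1 + ·) (by fun_prop) (add_zero 1))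
    (hlim (1 - ·) (by fun_prop) (sub_zero 1)) ?_ ?_
  · filter_upwards [self_mem_nhdsWithin] with ε (hε : 0 < ε)
    refine ⟨_, tendsto_ofReal_mul_measure_dominatedPairs_inter μ
      (hmeas_comp (1 + ε⁻¹)) (hmeas_comp (1 + ε⁻¹)) (fun _ => hψ0 _)
      (hfin_comp _ (by positivity)) (hfin_comp _ (by positivity)), ?_⟩
    filter_upwards [self_mem_nhdsWithin] with ν hν
    exact ofReal_mul_measure_dominatedPairs_le μ hψm hψ0 hu hε hν
  · filter_upwards [Ioo_mem_nhdsGT one_pos] with ε ⟨hε0, hε1⟩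
    obtain ⟨κ, hκ0, hκ⟩ := hscale _ (div_nonneg (sub_nonneg.2 hε1.le) hε0.le)
    have hκ' : ∀ s, 0 ≤ s → ψ ((1 - ε) * s) ≤ κ * ψ (ε * s) := fun s hs => by
      have h := hκ (ε * s) (by positivity)
      rwa [show (1 - ε) / ε * (ε * s) = (1 - ε) * s by field_simp] at h
    have hO := tendsto_ofReal_mul_measure_dominatedPairs_inter μ
      (hmeas_comp (1 - ε)) ((hψm.measurable.comp hu.abs).const_mul κ) (fun _ => hψ0 _)
      (hfin_comp _ (sub_nonneg.2 hε1.le))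
      (lintegral_ofReal_ne_top_of_le_mul hκ0 (fun _ => le_rfl) hfin)
    refine ⟨_, by simpa using ENNReal.Tendsto.const_mul hO (Or.inr (ENNReal.ofNat_ne_top (n := 2))),
      ?_⟩
    filter_upwards [self_mem_nhdsWithin] with ν hν
    exact two_mul_le_ofReal_mul_measure_dominatedPairs μ hψm hψ0 hu hε1.le hκ0 hκ' hν

theorem stmt1 (N : ℕ) (hN : 0 < N) (Φ : ℝ → ℝ)
    (hΦc : ContinuousOn Φ (Ici 0)) (hΦconv : ConvexOn ℝ (Ici 0) Φ)
    (hΦ0 : Φ 0 = 0) (hΦnn : ∀ s, 0 ≤ s → 0 ≤ Φ s)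
    (hΔ2 : ∃ k > 0, ∀ s > (0:ℝ), Φ (2 * s) ≤ k * Φ s)
    (u : EuclideanSpace ℝ (Fin N) → ℝ) (hu : Measurable u)
    (hfin : ∫⁻ x, ENNReal.ofReal (Φ (|u x|)) < ⊤) :
    Tendsto (fun t : ℝ => ENNReal.ofReal (Φ t) *
      volume {p : EuclideanSpace ℝ (Fin N) × EuclideanSpace ℝ (Fin N) |
        p.1 ≠ p.2 ∧ Φ t * dist p.1 p.2 ^ N ≤ Φ (|u p.1 - u p.2|)})
      (nhdsWithin 0 (Ioi 0))
      (nhds (2 * volume (ball (0 : EuclideanSpace ℝ (Fin N)) 1) *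
        ∫⁻ x, ENNReal.ofReal (Φ (|u x|)))) := by
  obtain ⟨k, -, hΔ⟩ := hΔ2
  have hmono : MonotoneOn Φ (Ici 0) :=
    hΦconv.monotoneOn_Ici_of_isMinOn <| isMinOn_iff.2 fun s hs => by rw [hΦ0]; exact hΦnn s hs
  by_cases hpos : ∀ t > 0, 0 < Φ t
  · have : Nonempty (Fin N) := ⟨⟨0, hN⟩⟩
    set ψ : ℝ → ℝ := fun s => Φ (max s 0)
    have hψ : ∀ s, 0 ≤ s → ψ s = Φ s := fun s hs => by simp only [ψ, max_eq_left hs]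
    have hψc : Continuous ψ :=
      hΦc.comp_continuous (continuous_id.max continuous_const) fun s => le_max_right s 0
    have hψm : Monotone ψ := fun a b hab =>
      hmono (le_max_right a 0) (le_max_right b 0) (max_le_max_right 0 hab)
    have key := tendsto_ofReal_mul_measure_dominatedPairs volume hψc hψm
      (fun s => hΦnn _ (le_max_right s 0)) (k := k)
      (fun s hs => by simpa only [hψ _ hs.le, hψ _ (by positivity : 0 ≤ 2 * s)] using hΔ s hs)
      hu (by simpa only [hψ _ (abs_nonneg _)] using hfin.ne)
    simp only [hψ _ (abs_nonneg _), finrank_euclideanSpace_fin, ← Measure.volume_eq_prod] at key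
    have hΦlim : Tendsto Φ (𝓝[>] 0) (𝓝[>] 0) := by
      have hΦ := (hΦc 0 self_mem_Ici).tendsto
      rw [hΦ0] at hΦ
      exact tendsto_nhdsWithin_iff.2 ⟨hΦ.mono_left (nhdsWithin_mono 0 Ioi_subset_Ici_self),
        eventually_nhdsWithin_of_forall hpos⟩
    exact key.comp hΦlim
  · push Not at hpos
    obtain ⟨t₀, ht₀, hΦt₀⟩ := hpos
    have hzero : ∀ s, 0 ≤ s → Φ s = 0 := fun s hs =>
      eq_zero_of_doubling hmono hΦnn hΔ ht₀ (le_antisymm hΦt₀ (hΦnn _ ht₀.le)) hs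
    simp only [hzero _ (abs_nonneg _), ENNReal.ofReal_zero, lintegral_zero, mul_zero]
    refine tendsto_const_nhds.congr' ?_
    filter_upwards [self_mem_nhdsWithin] with t ht
    rw [hzero t (le_of_lt ht), ENNReal.ofReal_zero, zero_mul]
end

section
/- Let Φ be a Young function satisfying the global Δ₂ condition and u ∈ L^Φ(ℝ^N). With E_t as above, one has 2ω_N ∫ Φ(|u|) ≤ sup_{t>0} Φ(t)·|E_t|_{2N} ≤ 2ω_N·Δ₂(Φ)·∫ Φ(|u|), where Δ₂(Φ) = inf{k > 0 : Φ(2t) ≤ kΦ(t) for all t > 0}. -/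
/-!
Upper bound: by monotonicity and the doubling condition,
`Φ |u x - u y| ≤ k * max (Φ |u x|) (Φ |u y|)`, so `E_t` is covered by
`B = {Φ t * |x - y| ^ N ≤ k * Φ |u x|}` and its mirror image, and by Fubini the sections of
`B` are balls, giving `Φ t * |B| = ω_N * k * ∫ Φ |u|`.

Lower bound: for `δ > 0`, the pairs with `|u x| > 2δ`, `|u y| ≤ δ` and
`Φ t * |x - y| ^ N ≤ Φ (|u x| - δ)`, together with their mirror images, form two disjoint
subsets of `E_t`. The `x`-section of the first one contains a ball of measure
`ω_N * Φ (|u x| - δ) / Φ t` minus `{|u| > δ}`, which has finite measure by Chebyshev. Hence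
`Φ t * |E_t| ≥ 2 ω_N ∫_{|u| > 2δ} Φ (|u| - δ) - 2 Φ t * |{|u| > δ}| * |{|u| > 2δ}|`; let `t → 0`,
then `δ → 0` (Fatou). By the doubling condition, a Young function vanishing at one positive
point vanishes identically, which disposes of the degenerate case.
-/

open MeasureTheory Metric Set Filter Topology Module
open scoped ENNReal

-- The set `E_t = {Φ (|u x - u y|) / |x - y| ^ d ≥ Φ t}`, written without division.
def diffQuotLevelSet {E : Type*} [Dist E] (d : ℕ) (Φ : ℝ → ℝ) (u : E → ℝ) (t : ℝ) :
    Set (E × E) :=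
  {p | p.1 ≠ p.2 ∧ Φ t * dist p.1 p.2 ^ d ≤ Φ |u p.1 - u p.2|}

lemma iSup_diffQuotLevelSet_congr {E : Type*} [Dist E] [MeasurableSpace E]
    (ν : Measure (E × E)) {d : ℕ} {Φ Ψ : ℝ → ℝ} (h : EqOn Φ Ψ (Ici 0)) (u : E → ℝ) :
    ⨆ t ∈ Ioi (0 : ℝ), ENNReal.ofReal (Φ t) * ν (diffQuotLevelSet d Φ u t) =
      ⨆ t ∈ Ioi (0 : ℝ), ENNReal.ofReal (Ψ t) * ν (diffQuotLevelSet d Ψ u t) := by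
  refine biSup_congr fun t ht => ?_
  have hset : diffQuotLevelSet d Φ u t = diffQuotLevelSet d Ψ u t := by
    ext p
    simp only [diffQuotLevelSet, mem_ofPred_eq, h (mem_Ioi.1 ht).le,
      h (abs_nonneg (u p.1 - u p.2))]
  rw [hset, h (mem_Ioi.1 ht).le]

lemma eqOn_comp_max_zero (Φ : ℝ → ℝ) : EqOn (fun s => Φ (max s 0)) Φ (Ici 0) :=
  fun _ hs => congrArg Φ (max_eq_left hs)

lemma MonotoneOn.comp_max_zero {Φ : ℝ → ℝ} (hΦ : MonotoneOn Φ (Ici 0)) :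
    Monotone fun s => Φ (max s 0) :=
  fun a b hab => hΦ (le_max_right a 0) (le_max_right b 0) (max_le_max_right 0 hab)

lemma doubling_of_eqOn {Φ Ψ : ℝ → ℝ} (h : EqOn Ψ Φ (Ici 0)) (hΦ0 : Φ 0 = 0) {k : ℝ}
    (hΔ : ∀ s > 0, Φ (2 * s) ≤ k * Φ s) : ∀ s, 0 ≤ s → Ψ (2 * s) ≤ k * Ψ s := by
  intro s hs
  rcases hs.eq_or_lt with rfl | hs
  · simp [h self_mem_Ici, hΦ0]
  · rw [h (by positivity : (0 : ℝ) ≤ 2 * s), h hs.le]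
    exact hΔ s hs

lemma ConvexOn.monotoneOn_of_isMinOn_s2 {Φ : ℝ → ℝ} {a : ℝ} (hΦ : ConvexOn ℝ (Ici a) Φ)
    (hmin : IsMinOn Φ (Ici a) a) : MonotoneOn Φ (Ici a) := by
  intro x hx y hy hxy
  rcases (mem_Ici.1 hx).eq_or_lt with rfl | hax
  · exact hmin hy
  · exact hΦ.le_right_of_left_le'' self_mem_Ici hy hax hxy (hmin hx)

lemma eqOn_zero_of_doubling {Φ : ℝ → ℝ} (hΦ : Monotone Φ) (hΦ0 : Φ 0 = 0) {k : ℝ} (hk : 0 ≤ k)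
    (hΔ : ∀ s, 0 ≤ s → Φ (2 * s) ≤ k * Φ s) {s₀ : ℝ} (hs₀ : 0 < s₀) (hΦs₀ : Φ s₀ ≤ 0) :
    EqOn Φ 0 (Ici 0) := by
  have hpow : ∀ n : ℕ, Φ (2 ^ n * s₀) ≤ 0 := by
    intro n
    induction n with
    | zero => simpa using hΦs₀
    | succ n ih =>
      calc Φ (2 ^ (n + 1) * s₀) = Φ (2 * (2 ^ n * s₀)) := by ring_nf
        _ ≤ k * Φ (2 ^ n * s₀) := hΔ _ (by positivity)
        _ ≤ 0 := mul_nonpos_of_nonneg_of_nonpos hk ih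
  intro s hs
  obtain ⟨n, hn⟩ := pow_unbounded_of_one_lt (s / s₀) one_lt_two
  exact le_antisymm ((hΦ ((div_lt_iff₀ hs₀).1 hn).le).trans (hpow n)) (by simpa [hΦ0] using hΦ hs)

lemma two_mul_prod_le_of_disjoint_swap {α : Type*} [MeasurableSpace α] (ν : Measure α)
    [SFinite ν] {A s : Set (α × α)} (hA : MeasurableSet A)
    (hdisj : Disjoint A (Prod.swap ⁻¹' A)) (hAs : A ⊆ s) (hAs' : Prod.swap ⁻¹' A ⊆ s) :
    2 * ν.prod ν A ≤ ν.prod ν s :=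
  calc 2 * ν.prod ν A = ν.prod ν A + ν.prod ν (Prod.swap ⁻¹' A) := by
        rw [Measure.measurePreserving_swap.measure_preimage hA.nullMeasurableSet, two_mul]
    _ = ν.prod ν (A ∪ Prod.swap ⁻¹' A) :=
        (measure_union hdisj (hA.preimage measurable_swap)).symm
    _ ≤ ν.prod ν s := measure_mono (union_subset hAs hAs')

lemma measure_lt_abs_ne_top {α : Type*} [MeasurableSpace α] (μ : Measure α) {Φ : ℝ → ℝ}
    (hΦ : Monotone Φ) {u : α → ℝ} (hu : Measurable u)
    (hfin : ∫⁻ x, ENNReal.ofReal (Φ |u x|) ∂μ ≠ ⊤) {δ : ℝ} (hδ : 0 < Φ δ) :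
    μ {x | δ < |u x|} ≠ ⊤ := by
  refine ne_top_of_le_ne_top (ENNReal.div_ne_top hfin (ENNReal.ofReal_pos.2 hδ).ne') ?_
  calc μ {x | δ < |u x|} ≤ μ {x | ENNReal.ofReal (Φ δ) ≤ ENNReal.ofReal (Φ |u x|)} :=
        measure_mono fun x hx => ENNReal.ofReal_le_ofReal (hΦ (le_of_lt hx))
    _ ≤ _ := meas_ge_le_lintegral_div (hΦ.measurable.comp hu.abs).ennreal_ofReal.aemeasurable
        (ENNReal.ofReal_pos.2 hδ).ne' ENNReal.ofReal_ne_top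

lemma le_mul_ofReal_sInf_mul {K : Set ℝ} (hK : K.Nonempty) (hKbdd : BddBelow K)
    {a b c : ℝ≥0∞} (hb : b ≠ ⊤) (hc : c ≠ ⊤) (h : ∀ k ∈ K, a ≤ b * ENNReal.ofReal k * c) :
    a ≤ b * ENNReal.ofReal (sInf K) * c := by
  set g : ℝ → ℝ≥0∞ := fun k => b * ENNReal.ofReal k * c
  have hg : Monotone g := fun k l hkl => by simp only [g]; gcongr
  have hgc : Continuous g := (ENNReal.continuous_mul_const hc).comp <|
    (ENNReal.continuous_const_mul hb).comp ENNReal.continuous_ofReal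
  calc a ≤ sInf (g '' K) := le_sInf (forall_mem_image.2 h)
    _ = g (sInf K) := (hg.map_csInf_of_continuousAt hgc.continuousAt hK hKbdd).symm

section Haar

variable {E : Type*} [NormedAddCommGroup E] [NormedSpace ℝ E] [FiniteDimensional ℝ E]
  [Nontrivial E] [MeasurableSpace E] [BorelSpace E] (μ : Measure E) [μ.IsAddHaarMeasure]

lemma addHaar_setOf_dist_pow_le (x : E) (c : ℝ) :
    μ {y | dist x y ^ finrank ℝ E ≤ c} = ENNReal.ofReal c * μ (ball 0 1) := by
  have hd : finrank ℝ E ≠ 0 := finrank_pos.ne'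
  rcases lt_or_ge c 0 with hc | hc
  · have hempty : {y | dist x y ^ finrank ℝ E ≤ c} = ∅ :=
      eq_empty_of_forall_notMem fun y hy => hc.not_ge ((pow_nonneg dist_nonneg _).trans hy)
    simp [hempty, ENNReal.ofReal_of_nonpos hc.le]
  · have hball : {y | dist x y ^ finrank ℝ E ≤ c} = closedBall x (c ^ (finrank ℝ E : ℝ)⁻¹) := by
      ext y
      rw [mem_ofPred_eq, mem_closedBall, dist_comm,
        ← pow_le_pow_iff_left₀ dist_nonneg (Real.rpow_nonneg hc _) hd,
        Real.rpow_inv_natCast_pow hc hd]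
    rw [hball, Measure.addHaar_closedBall _ _ (Real.rpow_nonneg hc _),
      Real.rpow_inv_natCast_pow hc hd]

lemma ofReal_mul_addHaar_setOf_mul_dist_pow_le {a : ℝ} (ha : 0 < a) (x : E) (b : ℝ) :
    ENNReal.ofReal a * μ {y | a * dist x y ^ finrank ℝ E ≤ b} =
      ENNReal.ofReal b * μ (ball 0 1) := by
  simp_rw [← le_div_iff₀' ha]
  rw [addHaar_setOf_dist_pow_le, ← mul_assoc, ← ENNReal.ofReal_mul ha.le, mul_div_cancel₀ _ ha.ne']

lemma ofReal_mul_prod_setOf_mul_dist_pow_le {a : ℝ} (ha : 0 < a) {g : E → ℝ}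
    (hg : Measurable g) :
    ENNReal.ofReal a * μ.prod μ {p | a * dist p.1 p.2 ^ finrank ℝ E ≤ g p.1} =
      (∫⁻ x, ENNReal.ofReal (g x) ∂μ) * μ (ball 0 1) := by
  have hmeas : MeasurableSet {p : E × E | a * dist p.1 p.2 ^ finrank ℝ E ≤ g p.1} :=
    measurableSet_le (by fun_prop) (hg.comp measurable_fst)
  rw [Measure.prod_apply hmeas, ← lintegral_const_mul' _ _ ENNReal.ofReal_ne_top,
    ← lintegral_mul_const _ hg.ennreal_ofReal]
  exact lintegral_congr fun x => ofReal_mul_addHaar_setOf_mul_dist_pow_le μ ha x (g x)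

lemma ofReal_mul_prod_diffQuotLevelSet_le {Φ : ℝ → ℝ} (hΦ : Monotone Φ) {k : ℝ} (hk : 0 ≤ k)
    (hΔ : ∀ s, 0 ≤ s → Φ (2 * s) ≤ k * Φ s) {u : E → ℝ} (hu : Measurable u) (t : ℝ) :
    ENNReal.ofReal (Φ t) * μ.prod μ (diffQuotLevelSet (finrank ℝ E) Φ u t) ≤
      2 * μ (ball 0 1) * ENNReal.ofReal k * ∫⁻ x, ENNReal.ofReal (Φ |u x|) ∂μ := by
  rcases le_or_gt (Φ t) 0 with ht | ht
  · simp [ENNReal.ofReal_of_nonpos ht]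
  have hF : Measurable fun x => k * Φ |u x| := (hΦ.measurable.comp hu.abs).const_mul k
  set B := {p : E × E | Φ t * dist p.1 p.2 ^ finrank ℝ E ≤ k * Φ |u p.1|}
  have hB : MeasurableSet B := measurableSet_le (by fun_prop) (hF.comp measurable_fst)
  have hsub : diffQuotLevelSet (finrank ℝ E) Φ u t ⊆ B ∪ Prod.swap ⁻¹' B := by
    rintro ⟨x, y⟩ ⟨-, hxy⟩
    have hdoubling : Φ |u x - u y| ≤ k * max (Φ |u x|) (Φ |u y|) :=
      calc Φ |u x - u y| ≤ Φ (2 * max |u x| |u y|) :=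
            hΦ <| by
              linarith [abs_sub (u x) (u y), le_max_left |u x| |u y|, le_max_right |u x| |u y|]
        _ ≤ k * Φ (max |u x| |u y|) := hΔ _ ((abs_nonneg _).trans (le_max_left _ _))
        _ = k * max (Φ |u x|) (Φ |u y|) := by rw [hΦ.map_max]
    rcases le_total (Φ |u y|) (Φ |u x|) with h | h
    · left
      exact hxy.trans (max_eq_left h ▸ hdoubling)
    · right
      show Φ t * dist y x ^ _ ≤ k * Φ |u y|
      exact dist_comm x y ▸ hxy.trans (max_eq_right h ▸ hdoubling)
  calc ENNReal.ofReal (Φ t) * μ.prod μ (diffQuotLevelSet (finrank ℝ E) Φ u t)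
      ≤ ENNReal.ofReal (Φ t) * (μ.prod μ B + μ.prod μ (Prod.swap ⁻¹' B)) := by
        gcongr
        exact (measure_mono hsub).trans (measure_union_le _ _)
    _ = 2 * (ENNReal.ofReal (Φ t) * μ.prod μ B) := by
        rw [Measure.measurePreserving_swap.measure_preimage hB.nullMeasurableSet]
        ring
    _ = 2 * μ (ball 0 1) * ENNReal.ofReal k * ∫⁻ x, ENNReal.ofReal (Φ |u x|) ∂μ := by
        rw [ofReal_mul_prod_setOf_mul_dist_pow_le μ ht hF]
        simp_rw [ENNReal.ofReal_mul hk]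
        rw [lintegral_const_mul' _ _ ENNReal.ofReal_ne_top]
        ring

lemma two_mul_setLIntegral_le {Φ : ℝ → ℝ} (hΦ : Monotone Φ) {u : E → ℝ} (hu : Measurable u)
    {δ t : ℝ} (ht : 0 < Φ t) :
    2 * μ (ball 0 1) * ∫⁻ x in {x | 2 * δ < |u x|}, ENNReal.ofReal (Φ (|u x| - δ)) ∂μ ≤
      ENNReal.ofReal (Φ t) * μ.prod μ (diffQuotLevelSet (finrank ℝ E) Φ u t) +
        ENNReal.ofReal (Φ t) * (2 * (μ {x | δ < |u x|} * μ {x | 2 * δ < |u x|})) := by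
  set S := {x | 2 * δ < |u x|}
  set T := {x | δ < |u x|}
  set A := {p : E × E | 2 * δ < |u p.1| ∧ |u p.2| ≤ δ ∧ p.1 ≠ p.2 ∧
    Φ t * dist p.1 p.2 ^ finrank ℝ E ≤ Φ (|u p.1| - δ)}
  have hA : MeasurableSet A :=
    (measurableSet_lt measurable_const (hu.comp measurable_fst).abs).inter <|
      (measurableSet_le (hu.comp measurable_snd).abs measurable_const).inter <|
      (measurableSet_eq_fun measurable_fst measurable_snd).compl.inter <|
      measurableSet_le (by fun_prop)
        (hΦ.measurable.comp ((hu.comp measurable_fst).abs.sub_const δ))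
  have hpairs : 2 * μ.prod μ A ≤ μ.prod μ (diffQuotLevelSet (finrank ℝ E) Φ u t) := by
    refine two_mul_prod_le_of_disjoint_swap μ hA ?_ ?_ ?_
    · rw [disjoint_left]
      rintro ⟨x, y⟩ ⟨hx, hy, -⟩ ⟨hy', hx', -⟩
      dsimp only [Prod.swap_prod_mk] at hx hy hy' hx'
      linarith [abs_nonneg (u y)]
    · rintro ⟨x, y⟩ ⟨-, hy, hxy, hΦxy⟩
      dsimp only at hy hxy hΦxy
      exact ⟨hxy, hΦxy.trans (hΦ (by linarith [abs_sub_abs_le_abs_sub (u x) (u y)]))⟩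
    · rintro ⟨x, y⟩ ⟨-, hx, hyx, hΦyx⟩
      dsimp only [Prod.swap_prod_mk] at hx hyx hΦyx
      refine ⟨hyx.symm, dist_comm y x ▸ hΦyx.trans (hΦ ?_)⟩
      linarith [abs_sub_abs_le_abs_sub (u y) (u x), abs_sub_comm (u x) (u y)]
  -- Off `T ∪ {x}`, the ball `{y | Φ t * |x - y| ^ d ≤ Φ (|u x| - δ)}` lies in the section of `A`.
  have hsection : ∀ x ∈ S, ENNReal.ofReal (Φ (|u x| - δ)) * μ (ball 0 1) ≤
      ENNReal.ofReal (Φ t) * (μ (Prod.mk x ⁻¹' A) + μ T) := by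
    intro x hx
    rw [← ofReal_mul_addHaar_setOf_mul_dist_pow_le μ ht]
    gcongr
    calc μ {y | Φ t * dist x y ^ finrank ℝ E ≤ Φ (|u x| - δ)}
        = μ ({y | Φ t * dist x y ^ finrank ℝ E ≤ Φ (|u x| - δ)} \ {x}) :=
          (measure_sdiff_null (measure_singleton x)).symm
      _ ≤ μ (Prod.mk x ⁻¹' A ∪ T) := by
          refine measure_mono fun y ⟨hy, hyx⟩ => ?_
          by_cases hyT : y ∈ T
          · exact Or.inr hyT
          · exact Or.inl ⟨hx, not_lt.1 hyT, Ne.symm hyx, hy⟩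
      _ ≤ μ (Prod.mk x ⁻¹' A) + μ T := measure_union_le _ _
  calc 2 * μ (ball 0 1) * ∫⁻ x in S, ENNReal.ofReal (Φ (|u x| - δ)) ∂μ
      = 2 * ∫⁻ x in S, ENNReal.ofReal (Φ (|u x| - δ)) * μ (ball 0 1) ∂μ := by
        rw [lintegral_mul_const' _ _ measure_ball_lt_top.ne]
        ring
    _ ≤ 2 * ∫⁻ x in S, ENNReal.ofReal (Φ t) * (μ (Prod.mk x ⁻¹' A) + μ T) ∂μ := by
        gcongr 2 * ?_
        exact setLIntegral_mono
          (((measurable_measure_prodMk_left hA).add_const _).const_mul _) hsection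
    _ ≤ 2 * (ENNReal.ofReal (Φ t) * (μ.prod μ A + μ T * μ S)) := by
        rw [lintegral_const_mul' _ _ ENNReal.ofReal_ne_top, lintegral_add_right _ measurable_const,
          setLIntegral_const, Measure.prod_apply hA]
        gcongr 2 * (_ * (?_ + _))
        exact setLIntegral_le_lintegral S _
    _ ≤ ENNReal.ofReal (Φ t) * μ.prod μ (diffQuotLevelSet (finrank ℝ E) Φ u t) +
        ENNReal.ofReal (Φ t) * (2 * (μ T * μ S)) := by
        calc 2 * (ENNReal.ofReal (Φ t) * (μ.prod μ A + μ T * μ S))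
            = ENNReal.ofReal (Φ t) * (2 * μ.prod μ A) +
                ENNReal.ofReal (Φ t) * (2 * (μ T * μ S)) := by ring
          _ ≤ _ := by gcongr

section

variable {Φ : ℝ → ℝ} (hΦc : Continuous Φ) (hΦm : Monotone Φ) (hΦ0 : Φ 0 = 0)
  (hΦpos : ∀ s, 0 < s → 0 < Φ s) {u : E → ℝ} (hu : Measurable u)
  (hfin : ∫⁻ x, ENNReal.ofReal (Φ |u x|) ∂μ ≠ ⊤)
include hΦc hΦm hΦ0 hΦpos hu hfin

lemma two_mul_setLIntegral_le_iSup {δ : ℝ} (hδ : 0 < δ) :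
    2 * μ (ball 0 1) * ∫⁻ x in {x | 2 * δ < |u x|}, ENNReal.ofReal (Φ (|u x| - δ)) ∂μ ≤
      ⨆ t ∈ Ioi (0 : ℝ), ENNReal.ofReal (Φ t) *
        μ.prod μ (diffQuotLevelSet (finrank ℝ E) Φ u t) := by
  set X := ⨆ t ∈ Ioi (0 : ℝ), ENNReal.ofReal (Φ t) *
    μ.prod μ (diffQuotLevelSet (finrank ℝ E) Φ u t)
  set C := 2 * (μ {x | δ < |u x|} * μ {x | 2 * δ < |u x|})
  have hC : C ≠ ⊤ := ENNReal.mul_ne_top ENNReal.ofNat_ne_top <| ENNReal.mul_ne_top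
    (measure_lt_abs_ne_top μ hΦm hu hfin (hΦpos δ hδ))
    (measure_lt_abs_ne_top μ hΦm hu hfin (hΦpos _ (by linarith)))
  have hlim : Tendsto (fun t => X + ENNReal.ofReal (Φ t) * C) (𝓝[>] 0) (𝓝 X) := by
    have hΦt : Tendsto (fun t => ENNReal.ofReal (Φ t)) (𝓝[>] 0) (𝓝 0) := by
      simpa [hΦ0] using ENNReal.tendsto_ofReal ((hΦc.tendsto 0).mono_left nhdsWithin_le_nhds)
    simpa using tendsto_const_nhds.add (ENNReal.Tendsto.mul_const hΦt (Or.inr hC))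
  refine ge_of_tendsto hlim (eventually_nhdsWithin_of_forall fun t ht => ?_)
  calc _ ≤ ENNReal.ofReal (Φ t) * μ.prod μ (diffQuotLevelSet (finrank ℝ E) Φ u t) +
        ENNReal.ofReal (Φ t) * C := two_mul_setLIntegral_le μ hΦm hu (hΦpos t ht)
    _ ≤ X + ENNReal.ofReal (Φ t) * C := by
        gcongr
        exact le_iSup₂ (f := fun t (_ : t ∈ Ioi (0 : ℝ)) => ENNReal.ofReal (Φ t) *
          μ.prod μ (diffQuotLevelSet (finrank ℝ E) Φ u t)) t ht

lemma two_mul_lintegral_le_iSup_of_monotone :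
    2 * μ (ball 0 1) * ∫⁻ x, ENNReal.ofReal (Φ |u x|) ∂μ ≤
      ⨆ t ∈ Ioi (0 : ℝ), ENNReal.ofReal (Φ t) *
        μ.prod μ (diffQuotLevelSet (finrank ℝ E) Φ u t) := by
  set f : ℝ → E → ℝ≥0∞ := fun δ =>
    {x | 2 * δ < |u x|}.indicator fun x => ENNReal.ofReal (Φ (|u x| - δ))
  have hf : ∀ δ, Measurable (f δ) := fun δ =>
    (hΦm.measurable.comp (hu.abs.sub_const δ)).ennreal_ofReal.indicator
      (measurableSet_lt measurable_const hu.abs)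
  have hf_lim : ∀ x, Tendsto (fun δ => f δ x) (𝓝[>] 0) (𝓝 (ENNReal.ofReal (Φ |u x|))) := by
    intro x
    rcases (abs_nonneg (u x)).eq_or_lt with hx | hx
    · refine tendsto_const_nhds.congr' (eventually_nhdsWithin_of_forall fun δ hδ => ?_)
      simp [f, ← hx, hΦ0, (mem_Ioi.1 hδ).le]
    · have hev : ∀ᶠ δ in 𝓝[>] (0 : ℝ), 2 * δ < |u x| :=
        nhdsWithin_le_nhds ((continuous_const.mul continuous_id).tendsto' 0 0 (mul_zero 2)
          |>.eventually_lt_const hx)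
      refine Tendsto.congr'
        (hev.mono fun δ hδ => (indicator_of_mem (show x ∈ {x | 2 * δ < |u x|} from hδ) _).symm) ?_
      refine ENNReal.tendsto_ofReal ((hΦc.tendsto _).comp ?_)
      exact ((continuous_const.sub continuous_id).tendsto' 0 _ (sub_zero _)).mono_left
        nhdsWithin_le_nhds
  have hω : 2 * μ (ball 0 1) ≠ ⊤ := ENNReal.mul_ne_top ENNReal.ofNat_ne_top measure_ball_lt_top.ne
  calc 2 * μ (ball 0 1) * ∫⁻ x, ENNReal.ofReal (Φ |u x|) ∂μ
      = ∫⁻ x, liminf (fun δ => 2 * μ (ball 0 1) * f δ x) (𝓝[>] 0) ∂μ := by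
        rw [← lintegral_const_mul' _ _ hω]
        exact lintegral_congr fun x =>
          ((ENNReal.Tendsto.const_mul (hf_lim x) (Or.inr hω)).liminf_eq).symm
    _ ≤ liminf (fun δ => ∫⁻ x, 2 * μ (ball 0 1) * f δ x ∂μ) (𝓝[>] 0) :=
        lintegral_liminf_le fun δ => (hf δ).const_mul _
    _ ≤ _ := by
        refine liminf_le_of_frequently_le' (Eventually.frequently
          (eventually_nhdsWithin_of_forall fun δ hδ => ?_))
        rw [lintegral_const_mul _ (hf δ),
          lintegral_indicator (measurableSet_lt measurable_const hu.abs)]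
        exact two_mul_setLIntegral_le_iSup μ hΦc hΦm hΦ0 hΦpos hu hfin hδ

end

variable {Φ : ℝ → ℝ} {u : E → ℝ}

theorem two_mul_lintegral_le_iSup (hΦc : ContinuousOn Φ (Ici 0)) (hΦm : MonotoneOn Φ (Ici 0))
    (hΦ0 : Φ 0 = 0) (hΔ : ∃ k > 0, ∀ s > (0 : ℝ), Φ (2 * s) ≤ k * Φ s) (hu : Measurable u)
    (hfin : ∫⁻ x, ENNReal.ofReal (Φ |u x|) ∂μ ≠ ⊤) :
    2 * μ (ball 0 1) * ∫⁻ x, ENNReal.ofReal (Φ |u x|) ∂μ ≤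
      ⨆ t ∈ Ioi (0 : ℝ), ENNReal.ofReal (Φ t) *
        μ.prod μ (diffQuotLevelSet (finrank ℝ E) Φ u t) := by
  obtain ⟨k, hk, hΔk⟩ := hΔ
  set Ψ : ℝ → ℝ := fun s => Φ (max s 0)
  have hΨΦ : EqOn Ψ Φ (Ici 0) := eqOn_comp_max_zero Φ
  have hΨ0 : Ψ 0 = 0 := (hΨΦ self_mem_Ici).trans hΦ0
  have hint : ∫⁻ x, ENNReal.ofReal (Ψ |u x|) ∂μ = ∫⁻ x, ENNReal.ofReal (Φ |u x|) ∂μ :=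
    lintegral_congr fun x => by rw [hΨΦ (abs_nonneg (u x))]
  rw [← hint, iSup_diffQuotLevelSet_congr _ hΨΦ.symm]
  by_cases hdeg : ∃ s₀, 0 < s₀ ∧ Ψ s₀ ≤ 0
  · obtain ⟨s₀, hs₀, hΨs₀⟩ := hdeg
    have hzero : EqOn Ψ 0 (Ici 0) := eqOn_zero_of_doubling hΦm.comp_max_zero hΨ0 hk.le
      (doubling_of_eqOn hΨΦ hΦ0 hΔk) hs₀ hΨs₀
    rw [lintegral_congr fun x => by rw [hzero (abs_nonneg (u x))]]
    simp
  · exact two_mul_lintegral_le_iSup_of_monotone μ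
      (hΦc.comp_continuous (by fun_prop) fun s => le_max_right s 0) hΦm.comp_max_zero hΨ0
      (fun s hs => not_le.1 fun h => hdeg ⟨s, hs, h⟩) hu (hint ▸ hfin)

theorem iSup_le_two_mul_sInf_mul (hΦm : MonotoneOn Φ (Ici 0)) (hΦ0 : Φ 0 = 0)
    (hΔ : ∃ k > 0, ∀ s > (0 : ℝ), Φ (2 * s) ≤ k * Φ s) (hu : Measurable u)
    (hfin : ∫⁻ x, ENNReal.ofReal (Φ |u x|) ∂μ ≠ ⊤) :
    ⨆ t ∈ Ioi (0 : ℝ), ENNReal.ofReal (Φ t) * μ.prod μ (diffQuotLevelSet (finrank ℝ E) Φ u t) ≤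
      2 * μ (ball 0 1) *
        ENNReal.ofReal (sInf {k : ℝ | 0 < k ∧ ∀ s > (0 : ℝ), Φ (2 * s) ≤ k * Φ s}) *
        ∫⁻ x, ENNReal.ofReal (Φ |u x|) ∂μ := by
  refine le_mul_ofReal_sInf_mul hΔ ⟨0, fun k hk => hk.1.le⟩
    (ENNReal.mul_ne_top ENNReal.ofNat_ne_top measure_ball_lt_top.ne) hfin ?_
  rintro k ⟨hk, hΔk⟩
  set Ψ : ℝ → ℝ := fun s => Φ (max s 0)
  have hΨΦ : EqOn Ψ Φ (Ici 0) := eqOn_comp_max_zero Φ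
  rw [iSup_diffQuotLevelSet_congr _ hΨΦ.symm,
    lintegral_congr fun x => by rw [← hΨΦ (abs_nonneg (u x))]]
  exact iSup₂_le fun t _ => ofReal_mul_prod_diffQuotLevelSet_le μ hΦm.comp_max_zero hk.le
    (doubling_of_eqOn hΨΦ hΦ0 hΔk) hu t

end Haar

theorem stmt2 (N : ℕ) (hN : 0 < N) (Φ : ℝ → ℝ)
    (hΦc : ContinuousOn Φ (Ici 0)) (hΦconv : ConvexOn ℝ (Ici 0) Φ)
    (hΦ0 : Φ 0 = 0) (hΦnn : ∀ s, 0 ≤ s → 0 ≤ Φ s)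
    (hΔ2 : ∃ k > 0, ∀ s > (0:ℝ), Φ (2 * s) ≤ k * Φ s)
    (u : EuclideanSpace ℝ (Fin N) → ℝ) (hu : Measurable u)
    (hfin : ∫⁻ x, ENNReal.ofReal (Φ (|u x|)) < ⊤) :
    2 * volume (ball (0 : EuclideanSpace ℝ (Fin N)) 1) *
        ∫⁻ x, ENNReal.ofReal (Φ (|u x|)) ≤
      (⨆ t ∈ Ioi (0:ℝ), ENNReal.ofReal (Φ t) *
        volume {p : EuclideanSpace ℝ (Fin N) × EuclideanSpace ℝ (Fin N) |
          p.1 ≠ p.2 ∧ Φ t * dist p.1 p.2 ^ N ≤ Φ (|u p.1 - u p.2|)}) ∧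
    (⨆ t ∈ Ioi (0:ℝ), ENNReal.ofReal (Φ t) *
        volume {p : EuclideanSpace ℝ (Fin N) × EuclideanSpace ℝ (Fin N) |
          p.1 ≠ p.2 ∧ Φ t * dist p.1 p.2 ^ N ≤ Φ (|u p.1 - u p.2|)}) ≤
      2 * volume (ball (0 : EuclideanSpace ℝ (Fin N)) 1) *
        ENNReal.ofReal (sInf {k : ℝ | 0 < k ∧ ∀ s > (0:ℝ), Φ (2 * s) ≤ k * Φ s}) *
        ∫⁻ x, ENNReal.ofReal (Φ (|u x|)) := by
  have hd : finrank ℝ (EuclideanSpace ℝ (Fin N)) = N := finrank_euclideanSpace_fin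
  have : Nontrivial (EuclideanSpace ℝ (Fin N)) := finrank_pos_iff.1 (hd ▸ hN)
  have hΦm : MonotoneOn Φ (Ici 0) :=
    hΦconv.monotoneOn_of_isMinOn_s2 fun s hs => by simpa [hΦ0] using hΦnn s hs
  have hlower := two_mul_lintegral_le_iSup volume hΦc hΦm hΦ0 hΔ2 hu hfin.ne
  have hupper := iSup_le_two_mul_sInf_mul volume hΦm hΦ0 hΔ2 hu hfin.ne
  rw [hd] at hlower hupper
  exact ⟨hlower, hupper⟩
end

section
/- Let Φ be a Young function and u : ℝ^N → ℝ supported in the ball B_R of radius R. For t > 0 and x ∈ B_R, define H_{t,x} = {y ∈ ℝ^N : |y| > |x|, Φ(|u(x)-u(y)|) ≥ Φ(t)|x-y|^N} (assume Φ(t) > 0). Then ω_N·Φ(|u(x)|)/Φ(t) − ω_N R^N ≤ |H_{t,x}|_N ≤ ω_N·Φ(|u(x)|)/Φ(t) + ω_N R^N. -/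
/-!
Outside the ball `B_R` the function `u` vanishes and `‖x‖ < R ≤ ‖y‖`, so there the
defining condition of `H_{t,x}` reads `Φ t * |x - y| ^ N ≤ Φ |u x|`, i.e. `y` lies in the
closed ball around `x` of volume `ω_N Φ(|u(x)|) / Φ(t)`. Two sets that agree outside `B_R`
have measures differing by at most `|B_R|_N = ω_N R ^ N`.
-/

open MeasureTheory Metric Set Module

theorem measure_le_add_of_forall_notMem {α : Type*} [MeasurableSpace α] (μ : Measure α)
    {S T B : Set α} (h : ∀ y ∉ B, y ∈ S → y ∈ T) : μ S ≤ μ T + μ B :=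
  calc μ S ≤ μ (T ∪ B) := measure_mono fun y hy ↦ by
        by_cases hyB : y ∈ B
        · exact Or.inr hyB
        · exact Or.inl (h y hyB hy)
    _ ≤ μ T + μ B := measure_union_le T B

theorem mul_dist_pow_le_iff_mem_closedBall {E : Type*} [PseudoMetricSpace E] {x y : E}
    {n : ℕ} (hn : n ≠ 0) {a c : ℝ} (ha : 0 < a) (hc : 0 ≤ c) :
    a * dist x y ^ n ≤ c ↔ y ∈ closedBall x ((c / a) ^ (n⁻¹ : ℝ)) := by
  have hca : 0 ≤ c / a := div_nonneg hc ha.le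
  rw [mem_closedBall, dist_comm, ← le_div_iff₀' ha,
    ← pow_le_pow_iff_left₀ dist_nonneg (Real.rpow_nonneg hca _) hn,
    Real.rpow_inv_natCast_pow hca hn]

theorem addHaar_closedBall_rpow_inv {E : Type*} [NormedAddCommGroup E] [NormedSpace ℝ E]
    [MeasurableSpace E] [BorelSpace E] [FiniteDimensional ℝ E] (μ : Measure E)
    [μ.IsAddHaarMeasure] (x : E) {n : ℕ} (hE : finrank ℝ E = n) (hn : n ≠ 0) {q : ℝ}
    (hq : 0 ≤ q) : μ (closedBall x (q ^ (n⁻¹ : ℝ))) = μ (ball 0 1) * ENNReal.ofReal q := by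
  rw [Measure.addHaar_closedBall μ x (Real.rpow_nonneg hq _), hE,
    Real.rpow_inv_natCast_pow hq hn, mul_comm]

theorem stmt3_general (N : ℕ) (hN : 0 < N) (Φ : ℝ → ℝ)
    (hΦnn : ∀ s, 0 ≤ s → 0 ≤ Φ s)
    (R : ℝ)
    (u : EuclideanSpace ℝ (Fin N) → ℝ)
    (hsupp : ∀ x, x ∉ ball (0 : EuclideanSpace ℝ (Fin N)) R → u x = 0)
    (t : ℝ) (hΦt : 0 < Φ t)
    (x : EuclideanSpace ℝ (Fin N)) (hx : x ∈ ball (0 : EuclideanSpace ℝ (Fin N)) R) :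
    volume (ball (0 : EuclideanSpace ℝ (Fin N)) 1) *
        ENNReal.ofReal (Φ (|u x|) / Φ t) ≤
      volume {y : EuclideanSpace ℝ (Fin N) |
          ‖x‖ < ‖y‖ ∧ Φ t * dist x y ^ N ≤ Φ (|u x - u y|)} +
        volume (ball (0 : EuclideanSpace ℝ (Fin N)) 1) * ENNReal.ofReal (R ^ N) ∧
    volume {y : EuclideanSpace ℝ (Fin N) |
        ‖x‖ < ‖y‖ ∧ Φ t * dist x y ^ N ≤ Φ (|u x - u y|)} ≤
      volume (ball (0 : EuclideanSpace ℝ (Fin N)) 1) *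
          ENNReal.ofReal (Φ (|u x|) / Φ t) +
        volume (ball (0 : EuclideanSpace ℝ (Fin N)) 1) * ENNReal.ofReal (R ^ N) := by
  have : Nonempty (Fin N) := ⟨⟨0, hN⟩⟩
  have hxR : ‖x‖ < R := mem_ball_zero_iff.mp hx
  have hΦux : 0 ≤ Φ |u x| := hΦnn _ (abs_nonneg _)
  have hagree : ∀ y ∉ ball (0 : EuclideanSpace ℝ (Fin N)) R,
      (‖x‖ < ‖y‖ ∧ Φ t * dist x y ^ N ≤ Φ |u x - u y|) ↔
        y ∈ closedBall x ((Φ |u x| / Φ t) ^ (N⁻¹ : ℝ)) := by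
    intro y hy
    rw [hsupp y hy, sub_zero, mul_dist_pow_le_iff_mem_closedBall hN.ne' hΦt hΦux]
    exact and_iff_right (hxR.trans_le (by simpa using hy))
  have hballR : volume (ball (0 : EuclideanSpace ℝ (Fin N)) R)
      = volume (ball (0 : EuclideanSpace ℝ (Fin N)) 1) * ENNReal.ofReal (R ^ N) := by
    rw [Measure.addHaar_ball _ _ ((norm_nonneg x).trans hxR.le), finrank_euclideanSpace_fin,
      mul_comm]
  rw [← addHaar_closedBall_rpow_inv volume x finrank_euclideanSpace_fin hN.ne'
    (div_nonneg hΦux hΦt.le), ← hballR]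
  exact ⟨measure_le_add_of_forall_notMem volume fun y hy ↦ (hagree y hy).2,
    measure_le_add_of_forall_notMem volume fun y hy ↦ (hagree y hy).1⟩

theorem stmt3 (N : ℕ) (hN : 0 < N) (Φ : ℝ → ℝ)
    (hΦc : ContinuousOn Φ (Ici 0)) (hΦconv : ConvexOn ℝ (Ici 0) Φ)
    (hΦ0 : Φ 0 = 0) (hΦnn : ∀ s, 0 ≤ s → 0 ≤ Φ s)
    (R : ℝ) (hR : 0 < R)
    (u : EuclideanSpace ℝ (Fin N) → ℝ) (hu : Measurable u)
    (hsupp : ∀ x, x ∉ ball (0 : EuclideanSpace ℝ (Fin N)) R → u x = 0)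
    (t : ℝ) (ht : 0 < t) (hΦt : 0 < Φ t)
    (x : EuclideanSpace ℝ (Fin N)) (hx : x ∈ ball (0 : EuclideanSpace ℝ (Fin N)) R) :
    volume (ball (0 : EuclideanSpace ℝ (Fin N)) 1) *
        ENNReal.ofReal (Φ (|u x|) / Φ t) ≤
      volume {y : EuclideanSpace ℝ (Fin N) |
          ‖x‖ < ‖y‖ ∧ Φ t * dist x y ^ N ≤ Φ (|u x - u y|)} +
        volume (ball (0 : EuclideanSpace ℝ (Fin N)) 1) * ENNReal.ofReal (R ^ N) ∧
    volume {y : EuclideanSpace ℝ (Fin N) |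
        ‖x‖ < ‖y‖ ∧ Φ t * dist x y ^ N ≤ Φ (|u x - u y|)} ≤
      volume (ball (0 : EuclideanSpace ℝ (Fin N)) 1) *
          ENNReal.ofReal (Φ (|u x|) / Φ t) +
        volume (ball (0 : EuclideanSpace ℝ (Fin N)) 1) * ENNReal.ofReal (R ^ N) :=
  stmt3_general N hN Φ hΦnn R u hsupp t hΦt x hx
end

section
/- Let Φ be a Young function and u : ℝ^N → ℝ compactly supported in B_R. With E_t = {(x,y) ∈ ℝ^{2N} : x ≠ y, Φ(|u(x)-u(y)|) ≥ Φ(t)|x-y|^N} and Φ(t) > 0, one has 2ω_N ∫ Φ(|u|) − 2Φ(t)ω_N²R^{2N} ≤ Φ(t)·|E_t|_{2N} ≤ 2ω_N ∫ Φ(|u|) + 2Φ(t)ω_N²R^{2N}. -/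
/-!
Write `E_t` for the set of pairs in the statement; it is symmetric, and it contains no pair with
both points outside `B = B_R`, where `Φ(|u x - u y|) = Φ 0 = 0`. For `x ∈ B` and `y ∉ B` the
defining inequality reads `|x - y| ≤ r x` with `Φ(t) (r x)^N = Φ(|u x|)`, so the `x`-section of
`E_t ∩ (B × Bᶜ)` is the closed ball of radius `r x` minus `B`, whose measure lies between
`ω_N (r x)^N - |B|` and `ω_N (r x)^N`. Integrating over `B` and using the symmetry of `E_t`
gives both bounds, with error at most `|B|² = ω_N² R^{2N}`.
-/

open MeasureTheory Metric Set Module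

section SwapInvariant

variable {α : Type*} [MeasurableSpace α] {μ : Measure α} [SFinite μ] {S : Set (α × α)} {B : Set α}

theorem measure_inter_compl_prod_eq (hSswap : Prod.swap ⁻¹' S = S) (hS : MeasurableSet S)
    (hB : MeasurableSet B) :
    μ.prod μ (S ∩ Bᶜ ×ˢ B) = μ.prod μ (S ∩ B ×ˢ Bᶜ) := by
  have hpre : Prod.swap ⁻¹' (S ∩ B ×ˢ Bᶜ) = S ∩ Bᶜ ×ˢ B := by
    rw [preimage_inter, hSswap, preimage_swap_prod]
  rw [← hpre, Measure.measurePreserving_swap.measure_preimage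
    (hS.inter (hB.prod hB.compl)).nullMeasurableSet]

theorem two_mul_measure_inter_prod_compl_le (hSswap : Prod.swap ⁻¹' S = S)
    (hS : MeasurableSet S) (hB : MeasurableSet B) :
    2 * μ.prod μ (S ∩ B ×ˢ Bᶜ) ≤ μ.prod μ S := by
  have hdisj : Disjoint (S ∩ B ×ˢ Bᶜ) (S ∩ Bᶜ ×ˢ B) :=
    disjoint_left.2 fun _ h₁ h₂ ↦ h₂.2.1 h₁.2.1
  calc 2 * μ.prod μ (S ∩ B ×ˢ Bᶜ)
      = μ.prod μ (S ∩ B ×ˢ Bᶜ) + μ.prod μ (S ∩ Bᶜ ×ˢ B) := by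
        rw [measure_inter_compl_prod_eq hSswap hS hB, two_mul]
    _ = μ.prod μ ((S ∩ B ×ˢ Bᶜ) ∪ (S ∩ Bᶜ ×ˢ B)) :=
        (measure_union hdisj (hS.inter (hB.compl.prod hB))).symm
    _ ≤ μ.prod μ S := measure_mono (union_subset inter_subset_left inter_subset_left)

theorem measure_le_two_mul_measure_inter_prod_compl_add (hSswap : Prod.swap ⁻¹' S = S)
    (hS : MeasurableSet S) (hB : MeasurableSet B) (hSB : ∀ p ∈ S, p.1 ∈ B ∨ p.2 ∈ B) :
    μ.prod μ S ≤ 2 * μ.prod μ (S ∩ B ×ˢ Bᶜ) + μ B * μ B := by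
  have hcover : S ⊆ (S ∩ B ×ˢ Bᶜ) ∪ (S ∩ Bᶜ ×ˢ B) ∪ B ×ˢ B := by
    intro p hp
    by_cases h₁ : p.1 ∈ B <;> by_cases h₂ : p.2 ∈ B
    · exact Or.inr ⟨h₁, h₂⟩
    · exact Or.inl (Or.inl ⟨hp, h₁, h₂⟩)
    · exact Or.inl (Or.inr ⟨hp, h₁, h₂⟩)
    · exact ((hSB p hp).elim h₁ h₂).elim
  calc μ.prod μ S
      ≤ μ.prod μ (S ∩ B ×ˢ Bᶜ) + μ.prod μ (S ∩ Bᶜ ×ˢ B) + μ.prod μ (B ×ˢ B) :=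
        (measure_mono hcover).trans <|
          (measure_union_le _ _).trans (add_le_add_left (measure_union_le _ _) _)
    _ = 2 * μ.prod μ (S ∩ B ×ˢ Bᶜ) + μ B * μ B := by
        rw [measure_inter_compl_prod_eq hSswap hS hB, Measure.prod_prod, two_mul]

end SwapInvariant

theorem lintegral_ofReal_eq_mul_setLIntegral {α : Type*} [MeasurableSpace α] (μ : Measure α)
    {B : Set α} {f : α → ℝ} (hf : ∀ x ∉ B, f x = 0) {c : ℝ} (hc : 0 < c) :
    ∫⁻ x, ENNReal.ofReal (f x) ∂μ = ENNReal.ofReal c * ∫⁻ x in B, ENNReal.ofReal (f x / c) ∂μ := by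
  rw [← lintegral_const_mul' _ _ ENNReal.ofReal_ne_top]
  simp_rw [← ENNReal.ofReal_mul hc.le, mul_div_cancel₀ _ hc.ne']
  refine (setLIntegral_eq_of_support_subset fun x hx ↦ ?_).symm
  by_contra hxB
  exact hx (by simp only [hf x hxB, ENNReal.ofReal_zero])

section JumpSet

variable {E : Type*} [MetricSpace E]

def jumpSet (Φ : ℝ → ℝ) (u : E → ℝ) (c : ℝ) (n : ℕ) : Set (E × E) :=
  {p | p.1 ≠ p.2 ∧ c * dist p.1 p.2 ^ n ≤ Φ |u p.1 - u p.2|}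

def outwardSet (B : Set E) (g : E → ℝ) (n : ℕ) : Set (E × E) :=
  {p | p.1 ∈ B ∧ p.2 ∉ B ∧ dist p.1 p.2 ^ n ≤ g p.1}

variable {Φ : ℝ → ℝ} {u : E → ℝ} {c : ℝ} {B : Set E} {g : E → ℝ}

theorem preimage_swap_jumpSet (n : ℕ) : Prod.swap ⁻¹' jumpSet Φ u c n = jumpSet Φ u c n := by
  ext ⟨x, y⟩
  simp only [jumpSet, mem_preimage, Prod.swap_prod_mk, mem_ofPred_eq, ne_comm, dist_comm y,
    abs_sub_comm (u y)]

theorem measurableSet_jumpSet [MeasurableSpace E] [BorelSpace E] [SecondCountableTopology E]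
    (hΦ : Measurable fun s ↦ Φ |s|) (hu : Measurable u) (n : ℕ) :
    MeasurableSet (jumpSet Φ u c n) :=
  (isClosed_eq continuous_fst continuous_snd).measurableSet.compl.inter <|
    measurableSet_le (measurable_const.mul (continuous_dist.measurable.pow_const n))
      (hΦ.comp ((hu.comp measurable_fst).sub (hu.comp measurable_snd)))

theorem measurableSet_outwardSet [MeasurableSpace E] [BorelSpace E] [SecondCountableTopology E]
    (hB : MeasurableSet B) (hg : Measurable g) (n : ℕ) : MeasurableSet (outwardSet B g n) :=
  (measurable_fst hB).inter ((measurable_snd hB.compl).inter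
    (measurableSet_le (continuous_dist.measurable.pow_const n) (hg.comp measurable_fst)))

theorem fst_mem_or_snd_mem_of_mem_jumpSet (hΦ₀ : Φ 0 = 0) (hc : 0 < c)
    (hu : ∀ x ∉ B, u x = 0) {n : ℕ} {p : E × E} (hp : p ∈ jumpSet Φ u c n) :
    p.1 ∈ B ∨ p.2 ∈ B := by
  by_contra! h
  obtain ⟨hne, hle⟩ := hp
  rw [hu _ h.1, hu _ h.2, sub_zero, abs_zero, hΦ₀] at hle
  exact hle.not_gt (mul_pos hc (pow_pos (dist_pos.2 hne) n))

theorem jumpSet_inter_prod_compl (hc : 0 < c) (hu : ∀ x ∉ B, u x = 0) (n : ℕ) :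
    jumpSet Φ u c n ∩ B ×ˢ Bᶜ = outwardSet B (fun x ↦ Φ |u x| / c) n := by
  ext ⟨x, y⟩
  simp only [jumpSet, outwardSet, mem_inter_iff, mem_prod, mem_compl_iff, mem_ofPred_eq,
    le_div_iff₀ hc, mul_comm _ c]
  constructor
  · rintro ⟨⟨-, hle⟩, hx, hy⟩
    rw [hu y hy, sub_zero] at hle
    exact ⟨hx, hy, hle⟩
  · rintro ⟨hx, hy, hle⟩
    rw [hu y hy, sub_zero]
    exact ⟨⟨fun h ↦ hy (h ▸ hx), hle⟩, hx, hy⟩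

end JumpSet

section AddHaar

variable {E : Type*} [NormedAddCommGroup E] [NormedSpace ℝ E] [FiniteDimensional ℝ E]
  [MeasurableSpace E] [BorelSpace E] (μ : Measure E) [μ.IsAddHaarMeasure]

theorem addHaar_closedBall_rpow_inv_finrank [Nontrivial E] (x : E) {a : ℝ} (ha : 0 ≤ a) :
    μ (closedBall x (a ^ (finrank ℝ E : ℝ)⁻¹)) = ENNReal.ofReal a * μ (ball 0 1) := by
  rw [Measure.addHaar_closedBall μ x (Real.rpow_nonneg ha _),
    Real.rpow_inv_natCast_pow ha (finrank_pos (R := ℝ) (M := E)).ne']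

theorem addHaar_ball_mul_self_le [Nontrivial E] (x : E) (r : ℝ) :
    μ (ball x r) * μ (ball x r) ≤ μ (ball 0 1) ^ 2 * ENNReal.ofReal (r ^ (2 * finrank ℝ E)) := by
  rcases lt_or_ge r 0 with hr | hr
  · simp [ball_eq_empty.2 hr.le]
  rw [Measure.addHaar_ball μ x hr, pow_mul', ENNReal.ofReal_pow (pow_nonneg hr _)]
  exact le_of_eq (by ring)

variable {B : Set E} {g : E → ℝ}

theorem prod_outwardSet_eq_setLIntegral [Nontrivial E] (hB : MeasurableSet B)
    (hg : Measurable g) (hg₀ : ∀ x, 0 ≤ g x) :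
    μ.prod μ (outwardSet B g (finrank ℝ E)) =
      ∫⁻ x in B, μ (closedBall x (g x ^ (finrank ℝ E : ℝ)⁻¹) \ B) ∂μ := by
  have hn : finrank ℝ E ≠ 0 := finrank_pos.ne'
  rw [Measure.prod_apply (measurableSet_outwardSet hB hg _), ← lintegral_indicator hB]
  congr 1 with x
  by_cases hx : x ∈ B
  · rw [indicator_of_mem hx]
    congr 1 with y
    simp only [outwardSet, mem_preimage, mem_ofPred_eq, mem_sdiff, mem_closedBall, hx, true_and,
      dist_comm y]
    rw [← pow_le_pow_iff_left₀ dist_nonneg (Real.rpow_nonneg (hg₀ x) _) hn,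
      Real.rpow_inv_natCast_pow (hg₀ x) hn, and_comm]
  · simp [outwardSet, hx]

theorem prod_outwardSet_le [Nontrivial E] (hB : MeasurableSet B) (hg : Measurable g)
    (hg₀ : ∀ x, 0 ≤ g x) :
    μ.prod μ (outwardSet B g (finrank ℝ E)) ≤
      (∫⁻ x in B, ENNReal.ofReal (g x) ∂μ) * μ (ball 0 1) := by
  rw [prod_outwardSet_eq_setLIntegral μ hB hg hg₀, ← lintegral_mul_const _ hg.ennreal_ofReal]
  refine lintegral_mono fun x ↦ ?_
  rw [← addHaar_closedBall_rpow_inv_finrank μ x (hg₀ x)]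
  exact measure_mono sdiff_subset

theorem setLIntegral_le_prod_outwardSet_add [Nontrivial E] (hB : MeasurableSet B)
    (hg : Measurable g) (hg₀ : ∀ x, 0 ≤ g x) :
    (∫⁻ x in B, ENNReal.ofReal (g x) ∂μ) * μ (ball 0 1) ≤
      μ.prod μ (outwardSet B g (finrank ℝ E)) +
        μ B * μ B := by
  rw [prod_outwardSet_eq_setLIntegral μ hB hg hg₀, ← lintegral_mul_const _ hg.ennreal_ofReal,
    ← setLIntegral_const, ← lintegral_add_right _ measurable_const]
  refine lintegral_mono fun x ↦ ?_
  rw [← addHaar_closedBall_rpow_inv_finrank μ x (hg₀ x)]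
  exact tsub_le_iff_right.mp le_measure_sdiff

variable [Nontrivial E] {Φ : ℝ → ℝ} {u : E → ℝ} {c : ℝ}

theorem two_mul_addHaar_unitBall_mul_lintegral_le (hB : MeasurableSet B)
    (hΦ : Measurable fun s ↦ Φ |s|) (hΦ₀ : Φ 0 = 0) (hΦnn : ∀ s, 0 ≤ s → 0 ≤ Φ s) (hc : 0 < c)
    (hu : Measurable u) (hsupp : ∀ x ∉ B, u x = 0) :
    2 * μ (ball 0 1) * ∫⁻ x, ENNReal.ofReal (Φ |u x|) ∂μ ≤
      ENNReal.ofReal c * μ.prod μ (jumpSet Φ u c (finrank ℝ E)) +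
        2 * ENNReal.ofReal c * (μ B * μ B) := by
  have hg : Measurable fun x ↦ Φ |u x| / c := (hΦ.comp hu).div_const c
  have hg₀ : ∀ x, 0 ≤ Φ |u x| / c := fun x ↦ div_nonneg (hΦnn _ (abs_nonneg _)) hc.le
  have hcross := setLIntegral_le_prod_outwardSet_add μ hB hg hg₀
  rw [← jumpSet_inter_prod_compl hc hsupp] at hcross
  have hsym := two_mul_measure_inter_prod_compl_le (μ := μ) (preimage_swap_jumpSet _)
    (measurableSet_jumpSet (c := c) hΦ hu (finrank ℝ E)) hB
  rw [lintegral_ofReal_eq_mul_setLIntegral μ (fun x hx ↦ by rw [hsupp x hx, abs_zero, hΦ₀]) hc]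
  calc 2 * μ (ball 0 1) * (ENNReal.ofReal c * ∫⁻ x in B, ENNReal.ofReal (Φ |u x| / c) ∂μ)
      = 2 * ENNReal.ofReal c * ((∫⁻ x in B, ENNReal.ofReal (Φ |u x| / c) ∂μ) * μ (ball 0 1)) := by
        ring
    _ ≤ 2 * ENNReal.ofReal c *
          (μ.prod μ (jumpSet Φ u c (finrank ℝ E) ∩ B ×ˢ Bᶜ) + μ B * μ B) := by gcongr
    _ = ENNReal.ofReal c * (2 * μ.prod μ (jumpSet Φ u c (finrank ℝ E) ∩ B ×ˢ Bᶜ)) +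
          2 * ENNReal.ofReal c * (μ B * μ B) := by ring
    _ ≤ _ := by gcongr

theorem ofReal_mul_prod_jumpSet_le (hB : MeasurableSet B)
    (hΦ : Measurable fun s ↦ Φ |s|) (hΦ₀ : Φ 0 = 0) (hΦnn : ∀ s, 0 ≤ s → 0 ≤ Φ s) (hc : 0 < c)
    (hu : Measurable u) (hsupp : ∀ x ∉ B, u x = 0) :
    ENNReal.ofReal c * μ.prod μ (jumpSet Φ u c (finrank ℝ E)) ≤
      2 * μ (ball 0 1) * ∫⁻ x, ENNReal.ofReal (Φ |u x|) ∂μ + ENNReal.ofReal c * (μ B * μ B) := by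
  have hg : Measurable fun x ↦ Φ |u x| / c := (hΦ.comp hu).div_const c
  have hg₀ : ∀ x, 0 ≤ Φ |u x| / c := fun x ↦ div_nonneg (hΦnn _ (abs_nonneg _)) hc.le
  have hcross := prod_outwardSet_le μ hB hg hg₀
  rw [← jumpSet_inter_prod_compl hc hsupp] at hcross
  have hsym := measure_le_two_mul_measure_inter_prod_compl_add (μ := μ) (preimage_swap_jumpSet _)
    (measurableSet_jumpSet (c := c) hΦ hu (finrank ℝ E)) hB
    fun _ ↦ fst_mem_or_snd_mem_of_mem_jumpSet hΦ₀ hc hsupp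
  rw [lintegral_ofReal_eq_mul_setLIntegral μ (fun x hx ↦ by rw [hsupp x hx, abs_zero, hΦ₀]) hc]
  calc ENNReal.ofReal c * μ.prod μ (jumpSet Φ u c (finrank ℝ E))
      ≤ ENNReal.ofReal c *
          (2 * μ.prod μ (jumpSet Φ u c (finrank ℝ E) ∩ B ×ˢ Bᶜ) + μ B * μ B) := by gcongr
    _ ≤ ENNReal.ofReal c *
          (2 * ((∫⁻ x in B, ENNReal.ofReal (Φ |u x| / c) ∂μ) * μ (ball 0 1)) + μ B * μ B) := by
        gcongr
    _ = _ := by ring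

end AddHaar

theorem stmt4_general (N : ℕ) (hN : 0 < N) (Φ : ℝ → ℝ)
    (hΦc : ContinuousOn Φ (Ici 0))
    (hΦ0 : Φ 0 = 0) (hΦnn : ∀ s, 0 ≤ s → 0 ≤ Φ s)
    (R : ℝ)
    (u : EuclideanSpace ℝ (Fin N) → ℝ) (hu : Measurable u)
    (hsupp : ∀ x, x ∉ ball (0 : EuclideanSpace ℝ (Fin N)) R → u x = 0)
    (t : ℝ) (hΦt : 0 < Φ t) :
    2 * volume (ball (0 : EuclideanSpace ℝ (Fin N)) 1) *
        (∫⁻ x, ENNReal.ofReal (Φ (|u x|))) ≤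
      ENNReal.ofReal (Φ t) *
          volume {p : EuclideanSpace ℝ (Fin N) × EuclideanSpace ℝ (Fin N) |
            p.1 ≠ p.2 ∧ Φ t * dist p.1 p.2 ^ N ≤ Φ (|u p.1 - u p.2|)} +
        2 * ENNReal.ofReal (Φ t) *
          (volume (ball (0 : EuclideanSpace ℝ (Fin N)) 1)) ^ 2 *
          ENNReal.ofReal (R ^ (2 * N)) ∧
    ENNReal.ofReal (Φ t) *
        volume {p : EuclideanSpace ℝ (Fin N) × EuclideanSpace ℝ (Fin N) |
          p.1 ≠ p.2 ∧ Φ t * dist p.1 p.2 ^ N ≤ Φ (|u p.1 - u p.2|)} ≤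
      2 * volume (ball (0 : EuclideanSpace ℝ (Fin N)) 1) *
          (∫⁻ x, ENNReal.ofReal (Φ (|u x|))) +
        2 * ENNReal.ofReal (Φ t) *
          (volume (ball (0 : EuclideanSpace ℝ (Fin N)) 1)) ^ 2 *
          ENNReal.ofReal (R ^ (2 * N)) := by
  have : Nontrivial (EuclideanSpace ℝ (Fin N)) :=
    Module.nontrivial_of_finrank_pos (R := ℝ) (by rwa [finrank_euclideanSpace_fin])
  have hΦ : Measurable fun s ↦ Φ |s| :=
    (hΦc.comp_continuous continuous_abs fun s ↦ abs_nonneg s).measurable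
  have hball := addHaar_ball_mul_self_le volume (0 : EuclideanSpace ℝ (Fin N)) R
  have hlower := two_mul_addHaar_unitBall_mul_lintegral_le volume measurableSet_ball hΦ hΦ0
    hΦnn hΦt hu hsupp
  have hupper := ofReal_mul_prod_jumpSet_le volume measurableSet_ball hΦ hΦ0 hΦnn hΦt hu hsupp
  simp only [finrank_euclideanSpace_fin, ← Measure.volume_eq_prod] at hball hlower hupper
  refine ⟨hlower.trans ?_, hupper.trans ?_⟩
  · rw [mul_assoc (2 * _) (_ ^ 2)]
    gcongr
    exact Subset.rfl
  · rw [mul_assoc (2 * _) (_ ^ 2)]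
    gcongr
    exact le_mul_of_one_le_left zero_le one_le_two

theorem stmt4 (N : ℕ) (hN : 0 < N) (Φ : ℝ → ℝ)
    (hΦc : ContinuousOn Φ (Ici 0)) (hΦconv : ConvexOn ℝ (Ici 0) Φ)
    (hΦ0 : Φ 0 = 0) (hΦnn : ∀ s, 0 ≤ s → 0 ≤ Φ s)
    (R : ℝ) (hR : 0 < R)
    (u : EuclideanSpace ℝ (Fin N) → ℝ) (hu : Measurable u)
    (hsupp : ∀ x, x ∉ ball (0 : EuclideanSpace ℝ (Fin N)) R → u x = 0)
    (hfin : ∫⁻ x, ENNReal.ofReal (Φ (|u x|)) < ⊤)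
    (t : ℝ) (ht : 0 < t) (hΦt : 0 < Φ t) :
    2 * volume (ball (0 : EuclideanSpace ℝ (Fin N)) 1) *
        (∫⁻ x, ENNReal.ofReal (Φ (|u x|))) ≤
      ENNReal.ofReal (Φ t) *
          volume {p : EuclideanSpace ℝ (Fin N) × EuclideanSpace ℝ (Fin N) |
            p.1 ≠ p.2 ∧ Φ t * dist p.1 p.2 ^ N ≤ Φ (|u p.1 - u p.2|)} +
        2 * ENNReal.ofReal (Φ t) *
          (volume (ball (0 : EuclideanSpace ℝ (Fin N)) 1)) ^ 2 *
          ENNReal.ofReal (R ^ (2 * N)) ∧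
    ENNReal.ofReal (Φ t) *
        volume {p : EuclideanSpace ℝ (Fin N) × EuclideanSpace ℝ (Fin N) |
          p.1 ≠ p.2 ∧ Φ t * dist p.1 p.2 ^ N ≤ Φ (|u p.1 - u p.2|)} ≤
      2 * volume (ball (0 : EuclideanSpace ℝ (Fin N)) 1) *
          (∫⁻ x, ENNReal.ofReal (Φ (|u x|))) +
        2 * ENNReal.ofReal (Φ t) *
          (volume (ball (0 : EuclideanSpace ℝ (Fin N)) 1)) ^ 2 *
          ENNReal.ofReal (R ^ (2 * N)) :=
  stmt4_general N hN Φ hΦc hΦ0 hΦnn R u hu hsupp t hΦt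
end
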